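/- arXiv:2201.12391 — 9 statements merged into one kernel-verified Lean document; each statement's English description precedes it below -/
import Mathlib

section
/- Let X be a real vector space, V₀ ⊆ X a linear subspace, D : X × X → ℝ a symmetric positive-semidefinite bilinear form, and set ‖x‖_V := √(D(x,x)). Let |·|₁ : X → ℝ be a seminorm, D^h : X × X → ℝ a bilinear form, and G : X → ℝ a linear map. Assume: (i) there is κ > 0 with ‖v‖_V ≤ κ·|v|₁ for all v ∈ V₀; (ii) there is c > 0 with D^h(v,v) ≥ c·|v|₁² for all v ∈ V₀; (iii) u ∈ X satisfies D(u,w) = G(w) for all w ∈ V₀; (iv) u^h ∈ V₀ satisfies D^h(u^h,w) = G(w) for all w ∈ V₀. Then, with C := 1 + κ²/c, for every v ∈ V₀ and every S ≥ 0 such that |D(v,w) − D^h(v,w)| ≤ S·‖w‖_V for all w ∈ V₀, one has ‖u − u^h‖_V ≤ C·(‖u − v‖_V + S). -/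
lemma bilin_cauchy_schwarz
    {X : Type*} [AddCommGroup X] [Module ℝ X]
    (D : X →ₗ[ℝ] X →ₗ[ℝ] ℝ)
    (hDsymm : ∀ x y : X, D x y = D y x)
    (hDpsd : ∀ x : X, 0 ≤ D x x) (x y : X) :
    |D x y| ≤ Real.sqrt (D x x) * Real.sqrt (D y y) := by
  have hq : ∀ t : ℝ, 0 ≤ D y y * (t * t) + (2 * D x y) * t + D x x := by
    intro t
    have h := hDpsd (x + t • y)
    have hexp : D (x + t • y) (x + t • y)
        = D y y * (t * t) + (2 * D x y) * t + D x x := by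
      simp only [map_add, map_smul, LinearMap.add_apply, LinearMap.smul_apply,
        smul_eq_mul]
      rw [hDsymm y x]
      ring
    linarith [hexp ▸ h]
  have hdisc := discrim_le_zero hq
  have hsq : (D x y) ^ 2 ≤ D x x * D y y := by
    unfold discrim at hdisc
    nlinarith
  calc |D x y| = Real.sqrt ((D x y) ^ 2) := (Real.sqrt_sq_eq_abs _).symm
    _ ≤ Real.sqrt (D x x * D y y) := Real.sqrt_le_sqrt hsq
    _ = Real.sqrt (D x x) * Real.sqrt (D y y) := Real.sqrt_mul (hDpsd x) _

lemma bilin_triangle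
    {X : Type*} [AddCommGroup X] [Module ℝ X]
    (D : X →ₗ[ℝ] X →ₗ[ℝ] ℝ)
    (hDsymm : ∀ x y : X, D x y = D y x)
    (hDpsd : ∀ x : X, 0 ≤ D x x) (x y : X) :
    Real.sqrt (D (x + y) (x + y)) ≤ Real.sqrt (D x x) + Real.sqrt (D y y) := by
  have hcs := bilin_cauchy_schwarz D hDsymm hDpsd x y
  have hxy : D x y ≤ Real.sqrt (D x x) * Real.sqrt (D y y) :=
    (abs_le.mp hcs).2
  have hexp : D (x + y) (x + y) = D x x + 2 * D x y + D y y := by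
    simp only [map_add, LinearMap.add_apply]
    rw [hDsymm y x]; ring
  have h1 : D (x + y) (x + y) ≤ (Real.sqrt (D x x) + Real.sqrt (D y y)) ^ 2 := by
    rw [hexp]
    have := Real.sq_sqrt (hDpsd x)
    have := Real.sq_sqrt (hDpsd y)
    nlinarith
  calc Real.sqrt (D (x + y) (x + y))
      ≤ Real.sqrt ((Real.sqrt (D x x) + Real.sqrt (D y y)) ^ 2) :=
        Real.sqrt_le_sqrt h1
    _ = Real.sqrt (D x x) + Real.sqrt (D y y) := by
        rw [Real.sqrt_sq (by positivity)]

/-- Abstract Strang-type lemma (energy-norm version).  `X` is a real vector space,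
`V₀` a linear subspace, `D` a symmetric positive-semidefinite bilinear form with
associated energy seminorm `nV x = √(D x x)`, `sn` a seminorm (playing the role of
the `H¹` seminorm), `Dh` an approximate bilinear form and `G` a linear functional. -/
theorem strang_energy_norm
    {X : Type*} [AddCommGroup X] [Module ℝ X]
    (V₀ : Submodule ℝ X)
    (D : X →ₗ[ℝ] X →ₗ[ℝ] ℝ)
    (hDsymm : ∀ x y : X, D x y = D y x)
    (hDpsd : ∀ x : X, 0 ≤ D x x)
    (nV : X → ℝ) (hnV : ∀ x : X, nV x = Real.sqrt (D x x))
    (sn : Seminorm ℝ X)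
    (Dh : X →ₗ[ℝ] X →ₗ[ℝ] ℝ)
    (G : X →ₗ[ℝ] ℝ)
    (κ : ℝ) (hκ : 0 < κ)
    (hembed : ∀ v ∈ V₀, nV v ≤ κ * sn v)
    (c : ℝ) (hc : 0 < c)
    (hcoer : ∀ v ∈ V₀, c * (sn v) ^ 2 ≤ Dh v v)
    (u : X) (hu : ∀ w ∈ V₀, D u w = G w)
    (uh : X) (huh : uh ∈ V₀) (huhEq : ∀ w ∈ V₀, Dh uh w = G w)
    (v : X) (hv : v ∈ V₀)
    (S : ℝ) (hS : 0 ≤ S)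
    (hcons : ∀ w ∈ V₀, |D v w - Dh v w| ≤ S * nV w) :
    nV (u - uh) ≤ (1 + κ ^ 2 / c) * (nV (u - v) + S) := by
  set w : X := uh - v with hw_def
  have hw : w ∈ V₀ := V₀.sub_mem huh hv
  set A : ℝ := nV (u - v) with hA_def
  have hA0 : 0 ≤ A := by rw [hA_def, hnV]; exact Real.sqrt_nonneg _
  have hnVw0 : 0 ≤ nV w := by rw [hnV]; exact Real.sqrt_nonneg _
  -- key identity: Dh w w = D (u - v) w + (D v w - Dh v w)
  have hkey : Dh w w = D (u - v) w + (D v w - Dh v w) := by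
    have h1 : Dh uh w = D u w := by rw [huhEq w hw, hu w hw]
    have h2 : Dh w w = Dh uh w - Dh v w := by
      have : Dh w = Dh uh - Dh v := by rw [hw_def, map_sub]
      rw [this]; simp
    have h3 : D (u - v) w = D u w - D v w := by
      have : D (u - v) = D u - D v := by rw [map_sub]
      rw [this]; simp
    rw [h2, h1, h3]; ring
  -- bound Dh w w
  have hCS : |D (u - v) w| ≤ A * nV w := by
    rw [hA_def, hnV, hnV]
    exact bilin_cauchy_schwarz D hDsymm hDpsd (u - v) w
  have hDh_bound : Dh w w ≤ (A + S) * nV w := by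
    rw [hkey]
    have := hcons w hw
    have h1 : D (u - v) w ≤ A * nV w := (abs_le.mp hCS).2
    have h2 : D v w - Dh v w ≤ S * nV w := (abs_le.mp this).2
    nlinarith
  have hcoerw := hcoer w hw
  have hembw := hembed w hw
  have hsn0 : 0 ≤ sn w := apply_nonneg sn w
  -- bound nV w
  have hnVw : nV w ≤ κ ^ 2 / c * (A + S) := by
    rcases eq_or_lt_of_le hsn0 with h0 | hpos
    · have : nV w ≤ 0 := by rw [← h0] at hembw; simpa using hembw
      have : nV w = 0 := le_antisymm this hnVw0
      rw [this]; positivity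
    · have hchain : c * (sn w) ^ 2 ≤ (A + S) * (κ * sn w) := by
        calc c * (sn w) ^ 2 ≤ Dh w w := hcoerw
          _ ≤ (A + S) * nV w := hDh_bound
          _ ≤ (A + S) * (κ * sn w) := by
              apply mul_le_mul_of_nonneg_left hembw (by linarith)
      have hsnw : sn w ≤ κ / c * (A + S) := by
        rw [div_mul_eq_mul_div, le_div_iff₀ hc]
        nlinarith
      calc nV w ≤ κ * sn w := hembw
        _ ≤ κ * (κ / c * (A + S)) :=
            mul_le_mul_of_nonneg_left hsnw (le_of_lt hκ)
        _ = κ ^ 2 / c * (A + S) := by ring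
  -- triangle inequality: u - uh = (u - v) + (-w)
  have htri : nV (u - uh) ≤ A + nV w := by
    have heq : u - uh = (u - v) + (-w) := by rw [hw_def]; abel
    have hnegw : nV (-w) = nV w := by
      rw [hnV, hnV]; simp
    rw [heq, hnV, hA_def, hnV, ← hnegw, hnV]
    exact bilin_triangle D hDsymm hDpsd (u - v) (-w)
  have hfac : (0:ℝ) ≤ κ ^ 2 / c := by positivity
  calc nV (u - uh) ≤ A + nV w := htri
    _ ≤ A + κ ^ 2 / c * (A + S) := by linarith
    _ ≤ (A + S) + κ ^ 2 / c * (A + S) := by linarith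
    _ = (1 + κ ^ 2 / c) * (A + S) := by ring
end

section
/- Let ζ > 0, C_ω > 0, and m, N̄, M ∈ ℕ with 1 ≤ m ≤ N̄ and M ≥ 1. Let h > 0, δ := m·h, h̄ := δ/N̄, L := M·h. For k ∈ ℤ with 1 ≤ |k| ≤ N̄ set c_k := sign(k)·(2|k| − 1)·h̄/2, and let ω_k be real numbers with ω_k ≥ C_ω·δ for all such k. Let u : ℝ → ℝ vanish outside [0, L] and be affine on each element [i·h, (i+1)·h] for 0 ≤ i < M, with slope a_i on the i-th element. Define D^h(u,u) := ∫₀^L (ζ/δ³) · ∑_{1 ≤ |k| ≤ N̄} (u(x + c_k) − u(x))² · ω_k dx. Then D^h(u,u) ≥ (ζ·C_ω/(8·N̄²)) · ∑_{i=0}^{M−1} a_i²·h; that is, D^h(u,u) ≥ c·|u|²_{H¹(0,L)} with c = ζ·C_ω/(8·N̄²) independent of h and δ. -/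
/-!
Dropping every quadrature point but `k = 1` only decreases the energy. Its offset
`s = c 1 = hbar / 2 = δ / (2 Nbar)` is at most `h / 2`, so on `[i h, (i + 1) h - s]` both `x` and
`x + s` lie in the `i`-th element and `u (x + s) - u x = a i s`: the element contributes at least
`(h - s) (a i s)² ≥ (h / 2) (a i s)²`. With `ω 1 ≥ Cω δ` and `δ = 2 Nbar s`, the prefactor
`ζ Cω s² / δ²` equals `ζ Cω / (4 Nbar²)`.
-/

open MeasureTheory Set

theorem mem_filter_Icc_neg_ne_zero_iff {N : ℕ} {k : ℤ} :
    k ∈ (Finset.Icc (-(N : ℤ)) N).filter (fun k => k ≠ 0) ↔ 1 ≤ |k| ∧ |k| ≤ (N : ℤ) := by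
  rw [Finset.mem_filter, Finset.mem_Icc, ← abs_le, ← abs_pos, Int.lt_iff_add_one_le, zero_add,
    and_comm]

section PiecewiseContinuity

variable {α β : Type*} [TopologicalSpace α] [LinearOrder α] [OrderClosedTopology α]
  [TopologicalSpace β]

theorem continuousOn_Icc_of_forall_continuousOn_Icc_succ {f : α → β} {t : ℕ → α}
    (ht : Monotone t) {n : ℕ} (hf : ∀ i < n, ContinuousOn f (Icc (t i) (t (i + 1)))) :
    ContinuousOn f (Icc (t 0) (t n)) := by
  induction n with
  | zero => simp
  | succ n ih =>
    rw [← Icc_union_Icc_eq_Icc (ht n.zero_le) (ht n.le_succ)]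
    exact (ih fun i hi => hf i (by omega)).union_of_isClosed (hf n n.lt_succ_self)
      isClosed_Icc isClosed_Icc

end PiecewiseContinuity

theorem continuousOn_Icc_of_eqOn_affine_on_mesh {u : ℝ → ℝ} {a : ℕ → ℝ} {h : ℝ} (hh : 0 ≤ h)
    {M : ℕ} (haff : ∀ i : ℕ, i < M → ∀ x ∈ Icc ((i : ℝ) * h) (((i : ℝ) + 1) * h),
      u x = u ((i : ℝ) * h) + a i * (x - (i : ℝ) * h)) :
    ContinuousOn u (Icc 0 (M * h)) := by
  have hmono : Monotone fun i : ℕ => (i : ℝ) * h :=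
    fun i j hij => mul_le_mul_of_nonneg_right (Nat.cast_le.2 hij) hh
  simpa using continuousOn_Icc_of_forall_continuousOn_Icc_succ hmono fun i hi => by
    push_cast
    exact (by fun_prop : Continuous fun x => u (i * h) + a i * (x - i * h)).continuousOn.congr
      (haff i hi)

section VanishingOutside

variable {α E : Type*} [TopologicalSpace α] {u : α → E} {s : Set α}

theorem ContinuousOn.measurable_of_eq_zero_off [MeasurableSpace α] [OpensMeasurableSpace α]
    [TopologicalSpace E] [MeasurableSpace E] [BorelSpace E] [Zero E]
    (hu : ContinuousOn u s) (hs : MeasurableSet s) (hu0 : ∀ x ∉ s, u x = 0) : Measurable u := by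
  classical
  have hpiece : s.piecewise u 0 = u := by
    funext x
    by_cases hx : x ∈ s <;> simp [hx, hu0]
  exact hpiece ▸ hu.measurable_piecewise continuousOn_const hs

theorem IsCompact.exists_bound_of_continuousOn_of_eq_zero_off [SeminormedAddGroup E]
    (hs : IsCompact s) (hu : ContinuousOn u s) (hu0 : ∀ x ∉ s, u x = 0) :
    ∃ C, ∀ x, ‖u x‖ ≤ C := by
  obtain ⟨C, hC⟩ := hs.exists_bound_of_continuousOn hu
  refine ⟨max C 0, fun x => ?_⟩
  by_cases hx : x ∈ s
  · exact (hC x hx).trans (le_max_left _ _)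
  · simp [hu0 x hx]

end VanishingOutside

theorem intervalIntegrable_sq_sub_comp_add {u : ℝ → ℝ} (hu : Measurable u) {C : ℝ}
    (hC : ∀ x, ‖u x‖ ≤ C) (t a b : ℝ) :
    IntervalIntegrable (fun x => (u (x + t) - u x) ^ 2) volume a b := by
  have hbound : ∀ x, ‖(u (x + t) - u x) ^ 2‖ ≤ (C + C) ^ 2 := fun x => by
    rw [norm_pow]
    exact pow_le_pow_left₀ (norm_nonneg _) ((norm_sub_le _ _).trans (add_le_add (hC _) (hC x))) 2
  rw [intervalIntegrable_iff]
  exact IntegrableOn.of_bound measure_Ioc_lt_top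
    ((((hu.comp (measurable_add_const t)).sub hu).pow_const 2).aestronglyMeasurable)
    _ (Filter.Eventually.of_forall hbound)

theorem intervalIntegrable_sq_sub_comp_add_of_affine_on_mesh {u : ℝ → ℝ} {a : ℕ → ℝ} {h : ℝ}
    {M : ℕ} (hh : 0 ≤ h) (hu0 : ∀ x ∉ Icc 0 (M * h), u x = 0)
    (haff : ∀ i : ℕ, i < M → ∀ x ∈ Icc ((i : ℝ) * h) (((i : ℝ) + 1) * h),
      u x = u ((i : ℝ) * h) + a i * (x - (i : ℝ) * h)) (t p q : ℝ) :
    IntervalIntegrable (fun x => (u (x + t) - u x) ^ 2) volume p q := by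
  have hu := continuousOn_Icc_of_eqOn_affine_on_mesh hh haff
  obtain ⟨C, hC⟩ := isCompact_Icc.exists_bound_of_continuousOn_of_eq_zero_off hu hu0
  exact intervalIntegrable_sq_sub_comp_add (hu.measurable_of_eq_zero_off measurableSet_Icc hu0)
    hC t p q

theorem mul_sq_le_integral_sq_sub_comp_add_of_eqOn_affine {u : ℝ → ℝ} {p q a s : ℝ}
    (hs : 0 ≤ s) (hsq : s ≤ q - p) (haff : ∀ x ∈ Icc p q, u x = u p + a * (x - p))
    (hint : IntervalIntegrable (fun x => (u (x + s) - u x) ^ 2) volume p q) :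
    (q - p - s) * (a * s) ^ 2 ≤ ∫ x in p..q, (u (x + s) - u x) ^ 2 := by
  have hconst : EqOn (fun x => (u (x + s) - u x) ^ 2) (fun _ => (a * s) ^ 2) (uIcc p (q - s)) := by
    intro x hx
    rw [uIcc_of_le (by linarith), mem_Icc] at hx
    dsimp only
    rw [haff x ⟨hx.1, by linarith⟩, haff (x + s) ⟨by linarith, by linarith⟩]
    ring
  calc (q - p - s) * (a * s) ^ 2 = ∫ x in p..q - s, (u (x + s) - u x) ^ 2 := by
        rw [intervalIntegral.integral_congr hconst, intervalIntegral.integral_const, smul_eq_mul]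
        ring
    _ ≤ ∫ x in p..q, (u (x + s) - u x) ^ 2 :=
        intervalIntegral.integral_mono_interval le_rfl (by linarith) (by linarith)
          (Filter.Eventually.of_forall fun _ => sq_nonneg _) hint

theorem mul_sum_sq_le_integral_sq_sub_comp_add_of_affine_on_mesh {u : ℝ → ℝ} {a : ℕ → ℝ}
    {h s : ℝ} {M : ℕ} (hs : 0 ≤ s) (hsh : s ≤ h)
    (haff : ∀ i : ℕ, i < M → ∀ x ∈ Icc ((i : ℝ) * h) (((i : ℝ) + 1) * h),
      u x = u ((i : ℝ) * h) + a i * (x - (i : ℝ) * h))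
    (hint : ∀ p q, IntervalIntegrable (fun x => (u (x + s) - u x) ^ 2) volume p q) :
    (h - s) * s ^ 2 * ∑ i ∈ Finset.range M, a i ^ 2 ≤
      ∫ x in (0 : ℝ)..M * h, (u (x + s) - u x) ^ 2 := by
  have hsplit := intervalIntegral.sum_integral_adjacent_intervals
    (a := fun i : ℕ => (i : ℝ) * h) (n := M) fun i _ => hint _ _
  push_cast at hsplit
  rw [zero_mul] at hsplit
  calc (h - s) * s ^ 2 * ∑ i ∈ Finset.range M, a i ^ 2
      = ∑ i ∈ Finset.range M, (((i : ℝ) + 1) * h - i * h - s) * (a i * s) ^ 2 := by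
        rw [Finset.mul_sum]
        exact Finset.sum_congr rfl fun i _ => by ring
    _ ≤ ∑ i ∈ Finset.range M, ∫ x in (i : ℝ) * h..((i : ℝ) + 1) * h, (u (x + s) - u x) ^ 2 :=
        Finset.sum_le_sum fun i hi =>
          mul_sq_le_integral_sq_sub_comp_add_of_eqOn_affine hs (by linarith)
            (haff i (Finset.mem_range.1 hi)) (hint _ _)
    _ = ∫ x in (0 : ℝ)..M * h, (u (x + s) - u x) ^ 2 := hsplit

theorem mul_mul_integral_le_integral_mul_sum_mul {ι : Type*} {S : Finset ι} {k₀ : ι}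
    (hk₀ : k₀ ∈ S) {f : ι → ℝ → ℝ} {ω : ι → ℝ} {K w L : ℝ} (hK : 0 ≤ K) (hL : 0 ≤ L)
    (hf : ∀ k ∈ S, ∀ x, 0 ≤ f k x) (hω : ∀ k ∈ S, 0 ≤ ω k) (hw : w ≤ ω k₀)
    (hint : ∀ k ∈ S, IntervalIntegrable (f k) volume 0 L) :
    K * w * ∫ x in (0 : ℝ)..L, f k₀ x ≤ ∫ x in (0 : ℝ)..L, K * ∑ k ∈ S, f k x * ω k := by
  have hsum_int : IntervalIntegrable (fun x => K * ∑ k ∈ S, f k x * ω k) volume 0 L := by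
    refine IntervalIntegrable.const_mul ?_ _
    simpa only [Finset.sum_fn] using
      IntervalIntegrable.sum S fun k hk => (hint k hk).mul_const (ω k)
  rw [mul_assoc, ← intervalIntegral.integral_const_mul, ← intervalIntegral.integral_const_mul]
  refine intervalIntegral.integral_mono_on hL (((hint k₀ hk₀).const_mul w).const_mul K)
    hsum_int fun x _ => ?_
  gcongr
  calc w * f k₀ x ≤ f k₀ x * ω k₀ := by
        rw [mul_comm]
        exact mul_le_mul_of_nonneg_left hw (hf k₀ hk₀ x)
    _ ≤ ∑ k ∈ S, f k x * ω k :=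
        Finset.single_le_sum (fun k hk => mul_nonneg (hf k hk x) (hω k hk)) hk₀

theorem discrete_energy_coercive_1d_general
    (ζ Cω : ℝ) (hζ : 0 < ζ) (hCω : 0 < Cω)
    (m Nbar M : ℕ) (hm : 1 ≤ m) (hmN : m ≤ Nbar)
    (h : ℝ) (hh : 0 < h)
    (δ hbar L : ℝ) (hδ : δ = m * h) (hhbar : hbar = δ / Nbar) (hL : L = M * h)
    (c : ℤ → ℝ)
    (hc : ∀ k : ℤ, 1 ≤ |k| → |k| ≤ (Nbar : ℤ) →
      c k = (Int.sign k : ℝ) * (2 * (|k| : ℝ) - 1) * hbar / 2)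
    (ω : ℤ → ℝ)
    (hω : ∀ k : ℤ, 1 ≤ |k| → |k| ≤ (Nbar : ℤ) → Cω * δ ≤ ω k)
    (u : ℝ → ℝ) (a : ℕ → ℝ)
    (hu0 : ∀ x : ℝ, x ∉ Set.Icc (0 : ℝ) L → u x = 0)
    (haff : ∀ i : ℕ, i < M → ∀ x ∈ Set.Icc ((i : ℝ) * h) (((i : ℝ) + 1) * h),
      u x = u ((i : ℝ) * h) + a i * (x - (i : ℝ) * h)) :
    (ζ * Cω / (8 * (Nbar : ℝ) ^ 2)) * ∑ i ∈ Finset.range M, (a i) ^ 2 * h ≤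
      ∫ x in (0 : ℝ)..L,
        (ζ / δ ^ 3) *
          ∑ k ∈ (Finset.Icc (-(Nbar : ℤ)) (Nbar : ℤ)).filter (fun k => k ≠ 0),
            (u (x + c k) - u x) ^ 2 * ω k := by
  subst hL
  set S := (Finset.Icc (-(Nbar : ℤ)) (Nbar : ℤ)).filter (fun k => k ≠ 0)
  have hN1 : 1 ≤ Nbar := hm.trans hmN
  have hN : (0 : ℝ) < Nbar := Nat.cast_pos.2 hN1
  have hδ0 : 0 < δ := hδ ▸ mul_pos (by exact_mod_cast hm) hh
  have h1S : (1 : ℤ) ∈ S := mem_filter_Icc_neg_ne_zero_iff.2 ⟨by simp, by simpa using hN1⟩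
  have hω_S : ∀ k ∈ S, Cω * δ ≤ ω k := fun k hk =>
    hω k (mem_filter_Icc_neg_ne_zero_iff.1 hk).1 (mem_filter_Icc_neg_ne_zero_iff.1 hk).2
  set s := c 1 with hs_def
  have hs : s = δ / (2 * Nbar) := by
    rw [hs_def, hc 1 le_rfl (by simpa using hN1), hhbar]
    simp only [Int.sign_one, Int.cast_one, abs_one]
    ring
  have hs0 : 0 ≤ s := hs ▸ by positivity
  have hsh : s ≤ h / 2 := by
    rw [hs, hδ, div_le_iff₀ (by positivity)]
    nlinarith [(Nat.cast_le.2 hmN : (m : ℝ) ≤ Nbar)]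
  have hint := intervalIntegrable_sq_sub_comp_add_of_affine_on_mesh hh.le hu0 haff
  calc (ζ * Cω / (8 * (Nbar : ℝ) ^ 2)) * ∑ i ∈ Finset.range M, (a i) ^ 2 * h
      = ζ / δ ^ 3 * (Cω * δ) * ((h / 2) * s ^ 2 * ∑ i ∈ Finset.range M, a i ^ 2) := by
        rw [hs, ← Finset.sum_mul]
        field_simp
        ring
    _ ≤ ζ / δ ^ 3 * (Cω * δ) * ((h - s) * s ^ 2 * ∑ i ∈ Finset.range M, a i ^ 2) := by
        gcongr
        linarith
    _ ≤ ζ / δ ^ 3 * (Cω * δ) * ∫ x in (0 : ℝ)..M * h, (u (x + s) - u x) ^ 2 := by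
        gcongr
        exact mul_sum_sq_le_integral_sq_sub_comp_add_of_affine_on_mesh hs0 (by linarith) haff
          (hint s)
    _ ≤ _ := mul_mul_integral_le_integral_mul_sum_mul h1S (by positivity) (by positivity)
        (fun _ _ _ => sq_nonneg _) (fun k hk => (by positivity : 0 ≤ Cω * δ).trans (hω_S k hk))
        (hω_S 1 h1S) fun k _ => hint (c k) 0 _

/-- One-dimensional coercivity of the inner-quadrature bilinear form (Lemma 1 of the
paper).  Here `δ = m·h`, `hbar = δ/Nbar`, `L = M·h`, the quadrature offsets are
`c k = sign k · (2|k| − 1) · hbar/2` for `1 ≤ |k| ≤ Nbar`, the weights satisfy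
`ω k ≥ Cω·δ`, and `u` vanishes outside `[0,L]` and is affine with slope `a i` on
each element `[i·h, (i+1)·h]`.  Then the discrete energy dominates
`(ζ·Cω/(8·Nbar²))` times the squared `H¹(0,L)` seminorm `∑ aᵢ²·h` of `u`. -/
theorem discrete_energy_coercive_1d
    (ζ Cω : ℝ) (hζ : 0 < ζ) (hCω : 0 < Cω)
    (m Nbar M : ℕ) (hm : 1 ≤ m) (hmN : m ≤ Nbar) (hM : 1 ≤ M)
    (h : ℝ) (hh : 0 < h)
    (δ hbar L : ℝ) (hδ : δ = m * h) (hhbar : hbar = δ / Nbar) (hL : L = M * h)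
    (c : ℤ → ℝ)
    (hc : ∀ k : ℤ, 1 ≤ |k| → |k| ≤ (Nbar : ℤ) →
      c k = (Int.sign k : ℝ) * (2 * (|k| : ℝ) - 1) * hbar / 2)
    (ω : ℤ → ℝ)
    (hω : ∀ k : ℤ, 1 ≤ |k| → |k| ≤ (Nbar : ℤ) → Cω * δ ≤ ω k)
    (u : ℝ → ℝ) (a : ℕ → ℝ)
    (hu0 : ∀ x : ℝ, x ∉ Set.Icc (0 : ℝ) L → u x = 0)
    (haff : ∀ i : ℕ, i < M → ∀ x ∈ Set.Icc ((i : ℝ) * h) (((i : ℝ) + 1) * h),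
      u x = u ((i : ℝ) * h) + a i * (x - (i : ℝ) * h)) :
    (ζ * Cω / (8 * (Nbar : ℝ) ^ 2)) * ∑ i ∈ Finset.range M, (a i) ^ 2 * h ≤
      ∫ x in (0 : ℝ)..L,
        (ζ / δ ^ 3) *
          ∑ k ∈ (Finset.Icc (-(Nbar : ℤ)) (Nbar : ℤ)).filter (fun k => k ≠ 0),
            (u (x + c k) - u x) ^ 2 * ω k :=
  discrete_energy_coercive_1d_general ζ Cω hζ hCω m Nbar M hm hmN h hh δ hbar L hδ hhbar hL c hc ω
    hω u a hu0 haff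
end

section
/- Let h > 0 and N ∈ ℕ with N ≥ 3. Let v, w : ℝ → ℝ be continuous, equal to 0 on (−∞, h] ∪ [(N−1)h, ∞), and affine on each element [(i−1)h, i·h] with slope a_i (for v) and b_i (for w), i = 1,…,N (so that necessarily a_1 = a_N = b_1 = b_N = 0). Then ∫₀^{Nh} ∫₀^{Nh} 1_{{|y−x|<h}} · h^{−3} · (v(y) − v(x))·(w(y) − w(x)) dy dx = (2h/3)·∑_{i=1}^{N} a_i·b_i − (h/12)·∑_{i=1}^{N−1} (a_{i+1} − a_i)·(b_{i+1} − b_i). -/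
/-!
Since `v` and `w` vanish on the first and last element, for every `x` the inner integral over
`[0, N h]` is the integral of `(v y - v x) (w y - w x)` over the whole window `|y - x| < h`.
For `x` in the element `[k h, (k + 1) h]` the window meets only this element and its two
neighbours, on which `v` and `w` are affine, so the inner integral is a cubic polynomial in `x`
and its integral over the element is a quadratic form in the slopes of these three elements.
Summing over the elements, the second differences telescope and what remains is
`(2h/3) ∑ aᵢbᵢ − (h/12) ∑ (aᵢ₊₁ − aᵢ)(bᵢ₊₁ − bᵢ)`.
-/

open MeasureTheory Set

theorem integral_cubic (a₀ a₁ a₂ a₃ l u : ℝ) :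
    ∫ y in l..u, (a₀ + a₁ * y + a₂ * y ^ 2 + a₃ * y ^ 3) =
      a₀ * (u - l) + a₁ * (u ^ 2 - l ^ 2) / 2 + a₂ * (u ^ 3 - l ^ 3) / 3 +
        a₃ * (u ^ 4 - l ^ 4) / 4 := by
  have hint (f : ℝ → ℝ) (hf : Continuous f) : IntervalIntegrable f volume l u :=
    hf.intervalIntegrable l u
  rw [intervalIntegral.integral_add (hint _ (by fun_prop)) (hint _ (by fun_prop)),
    intervalIntegral.integral_add (hint _ (by fun_prop)) (hint _ (by fun_prop)),
    intervalIntegral.integral_add (hint _ (by fun_prop)) (hint _ (by fun_prop)),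
    intervalIntegral.integral_const_mul a₁ (fun y => y)]
  simp only [intervalIntegral.integral_const, intervalIntegral.integral_const_mul, integral_id,
    integral_pow, smul_eq_mul]
  ring

theorem integral_mul_of_affine {f g : ℝ → ℝ} {l u c p q r t : ℝ}
    (hf : ∀ y ∈ uIcc l u, f y = p + q * (y - c)) (hg : ∀ y ∈ uIcc l u, g y = r + t * (y - c)) :
    ∫ y in l..u, f y * g y =
      p * r * (u - l) + (p * t + q * r) * ((u - c) ^ 2 - (l - c) ^ 2) / 2 +
        q * t * ((u - c) ^ 3 - (l - c) ^ 3) / 3 := by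
  set P : ℝ → ℝ := fun y => p * r + (p * t + q * r) * y + q * t * y ^ 2 + 0 * y ^ 3
  rw [intervalIntegral.integral_congr (g := fun y => P (y - c))
      (fun y hy => by simp only [P, hf y hy, hg y hy]; ring),
    intervalIntegral.integral_comp_sub_right P, integral_cubic]
  ring

theorem integral_bernstein_cubic (h c₀ c₁ c₂ c₃ : ℝ) :
    ∫ u in (0 : ℝ)..h,
        (c₀ * (h - u) ^ 3 + c₁ * u * (h - u) ^ 2 + c₂ * u ^ 2 * (h - u) + c₃ * u ^ 3) =
      (c₀ + c₁ / 3 + c₂ / 3 + c₃) * h ^ 4 / 4 := by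
  rw [intervalIntegral.integral_congr (g := fun u => c₀ * h ^ 3 + (c₁ - 3 * c₀) * h ^ 2 * u +
      (3 * c₀ - 2 * c₁ + c₂) * h * u ^ 2 + (c₁ - c₀ - c₂ + c₃) * u ^ 3) (fun u _ => by ring),
    integral_cubic]
  ring

theorem continuous_integral_sub_add {G : ℝ → ℝ → ℝ} (hG : Continuous (Function.uncurry G))
    (h : ℝ) :
    Continuous fun x => ∫ y in x - h..x + h, G x y := by
  have hshift (x : ℝ) : ∫ y in x - h..x + h, G x y = ∫ t in -h..h, G x (x + t) := by
    rw [intervalIntegral.integral_comp_add_left, sub_eq_add_neg]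
  simp only [hshift]
  exact intervalIntegral.continuous_parametric_intervalIntegral_of_continuous' (by fun_prop) _ _

theorem integral_ite_abs_sub_lt {g : ℝ → ℝ} {L R x h : ℝ} (hLR : L ≤ R) (hh : 0 ≤ h)
    (hg : ∀ y, |y - x| < h → y ∉ Ioc L R → g y = 0) :
    ∫ y in L..R, (if |y - x| < h then g y else 0) = ∫ y in x - h..x + h, g y := by
  have hind : (fun y => if |y - x| < h then g y else 0) = (Metric.ball x h).indicator g := by
    ext y; simp [indicator, Real.dist_eq]
  rw [intervalIntegral.integral_of_le hLR, intervalIntegral.integral_of_le (by linarith),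
    integral_Ioc_eq_integral_Ioo (x := x - h), ← Real.ball_eq_Ioo, hind,
    setIntegral_eq_integral_of_forall_compl_eq_zero, integral_indicator measurableSet_ball]
  intro y hy
  by_cases hyx : y ∈ Metric.ball x h
  · rw [indicator_of_mem hyx, hg y (by simpa [Real.dist_eq] using hyx) hy]
  · exact indicator_of_notMem hyx g

def HasSlopeOn (f : ℝ → ℝ) (c : ℝ) (s : Set ℝ) : Prop :=
  ∀ y ∈ s, ∀ z ∈ s, f y - f z = c * (y - z)

namespace HasSlopeOn

variable {f : ℝ → ℝ} {c : ℝ}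

theorem of_eq_add_mul {l u : ℝ} (hf : ∀ x ∈ Icc l u, f x = f l + c * (x - l)) :
    HasSlopeOn f c (Icc l u) := fun y hy z hz => by
  rw [hf y hy, hf z hz]; ring

theorem of_eqOn_zero {s : Set ℝ} (hf : EqOn f 0 s) : HasSlopeOn f 0 s := fun y hy z hz => by
  simp [hf hy, hf hz]

theorem eq_zero_of_eq {l u : ℝ} (hf : HasSlopeOn f c (Icc l u)) (hlu : l < u) (hfl : f l = f u) :
    c = 0 := by
  have h := hf u ⟨hlu.le, le_rfl⟩ l ⟨le_rfl, hlu.le⟩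
  rw [hfl, sub_self, eq_comm, mul_eq_zero] at h
  exact h.resolve_right (sub_ne_zero.2 hlu.ne')

theorem sub_eq_of_three_cells {s h u a₀ a₂ : ℝ} (hf₀ : HasSlopeOn f a₀ (Icc (s - h) s))
    (hf₁ : HasSlopeOn f c (Icc s (s + h))) (hf₂ : HasSlopeOn f a₂ (Icc (s + h) (s + h + h)))
    (hu : u ∈ Icc 0 h) :
    (∀ y ∈ uIcc (s + u - h) s, f y - f (s + u) = -(c * u) + a₀ * (y - s)) ∧
      (∀ y ∈ uIcc s (s + h), f y - f (s + u) = -(c * u) + c * (y - s)) ∧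
      (∀ y ∈ uIcc (s + h) (s + u + h), f y - f (s + u) = c * (h - u) + a₂ * (y - (s + h))) := by
  obtain ⟨hu₀, hu₁⟩ := hu
  have hx : s + u ∈ Icc s (s + h) := ⟨by linarith, by linarith⟩
  have hs : s ∈ Icc s (s + h) := ⟨le_rfl, by linarith⟩
  have hsh : s + h ∈ Icc s (s + h) := ⟨by linarith, le_rfl⟩
  refine ⟨fun y hy => ?_, fun y hy => ?_, fun y hy => ?_⟩ <;> rw [uIcc_of_le (by linarith)] at hy
  · linear_combination hf₀ y ⟨by linarith [hy.1], hy.2⟩ s ⟨by linarith, le_rfl⟩ +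
      hf₁ s hs (s + u) hx
  · linear_combination hf₁ y hy (s + u) hx
  · linear_combination hf₂ y ⟨hy.1, by linarith [hy.2]⟩ (s + h) ⟨le_rfl, by linarith⟩ +
      hf₁ (s + h) hsh (s + u) hx

end HasSlopeOn

theorem integral_sub_mul_sub_of_three_cells {v w : ℝ → ℝ} (hv : Continuous v) (hw : Continuous w)
    {s h u a₀ a₁ a₂ b₀ b₁ b₂ : ℝ}
    (hv₀ : HasSlopeOn v a₀ (Icc (s - h) s)) (hv₁ : HasSlopeOn v a₁ (Icc s (s + h)))
    (hv₂ : HasSlopeOn v a₂ (Icc (s + h) (s + h + h)))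
    (hw₀ : HasSlopeOn w b₀ (Icc (s - h) s)) (hw₁ : HasSlopeOn w b₁ (Icc s (s + h)))
    (hw₂ : HasSlopeOn w b₂ (Icc (s + h) (s + h + h))) (hu : u ∈ Icc 0 h) :
    ∫ y in s + u - h..s + u + h, (v y - v (s + u)) * (w y - w (s + u)) =
      (a₀ * b₀ + a₁ * b₁) / 3 * (h - u) ^ 3 +
        ((a₀ * b₁ + a₁ * b₀) / 2 + a₁ * b₁) * u * (h - u) ^ 2 +
        (a₁ * b₁ + (a₁ * b₂ + a₂ * b₁) / 2) * u ^ 2 * (h - u) +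
        (a₁ * b₁ + a₂ * b₂) / 3 * u ^ 3 := by
  obtain ⟨hvL, hvM, hvR⟩ := hv₀.sub_eq_of_three_cells hv₁ hv₂ hu
  obtain ⟨hwL, hwM, hwR⟩ := hw₀.sub_eq_of_three_cells hw₁ hw₂ hu
  have hint (l r : ℝ) :
      IntervalIntegrable (fun y => (v y - v (s + u)) * (w y - w (s + u))) volume l r :=
    (by fun_prop : Continuous _).intervalIntegrable l r
  rw [← intervalIntegral.integral_add_adjacent_intervals (hint _ s) (hint s _),
    ← intervalIntegral.integral_add_adjacent_intervals (hint s (s + h)) (hint _ _),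
    integral_mul_of_affine hvL hwL, integral_mul_of_affine hvM hwM, integral_mul_of_affine hvR hwR]
  ring

/-- `α (k + 1)` is the slope on `[k h, (k + 1) h]` and `α k`, `α (k + 2)` those of its two
neighbours; `h ^ 4 * cellEnergy α β k` is the part of the form where `x ∈ [k h, (k + 1) h]`. -/
noncomputable def cellEnergy (α β : ℕ → ℝ) (k : ℕ) : ℝ :=
  α k * β k / 12 + (α k * β (k + 1) + α (k + 1) * β k) / 24 + α (k + 1) * β (k + 1) / 3 +
    (α (k + 1) * β (k + 2) + α (k + 2) * β (k + 1)) / 24 + α (k + 2) * β (k + 2) / 12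

theorem integral_cell {v w : ℝ → ℝ} (hv : Continuous v) (hw : Continuous w) {s h : ℝ}
    (hh : 0 ≤ h) {α β : ℕ → ℝ} {k : ℕ}
    (hv₀ : HasSlopeOn v (α k) (Icc (s - h) s)) (hv₁ : HasSlopeOn v (α (k + 1)) (Icc s (s + h)))
    (hv₂ : HasSlopeOn v (α (k + 2)) (Icc (s + h) (s + h + h)))
    (hw₀ : HasSlopeOn w (β k) (Icc (s - h) s)) (hw₁ : HasSlopeOn w (β (k + 1)) (Icc s (s + h)))
    (hw₂ : HasSlopeOn w (β (k + 2)) (Icc (s + h) (s + h + h))) :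
    ∫ x in s..s + h, ∫ y in x - h..x + h, (v y - v x) * (w y - w x) =
      h ^ 4 * cellEnergy α β k := by
  have hshift := intervalIntegral.integral_comp_add_left
    (fun x => ∫ y in x - h..x + h, (v y - v x) * (w y - w x)) s (a := 0) (b := h)
  rw [add_zero] at hshift
  rw [← hshift, intervalIntegral.integral_congr fun u hu => integral_sub_mul_sub_of_three_cells
    hv hw hv₀ hv₁ hv₂ hw₀ hw₁ hw₂ (uIcc_of_le hh ▸ hu), integral_bernstein_cubic, cellEnergy]
  ring

theorem hasSlopeOn_three_cells {f : ℝ → ℝ} {c : ℕ → ℝ} {h : ℝ} {k : ℕ}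
    (hf : ∀ j, k ≤ j → j ≤ k + 2 → HasSlopeOn f (c j) (Icc (j * h - h) (j * h))) :
    HasSlopeOn f (c k) (Icc (k * h - h) (k * h)) ∧
      HasSlopeOn f (c (k + 1)) (Icc (k * h) (k * h + h)) ∧
      HasSlopeOn f (c (k + 2)) (Icc (k * h + h) (k * h + h + h)) := by
  refine ⟨hf k le_rfl (by omega), ?_, ?_⟩
  · convert hf (k + 1) (by omega) (by omega) using 2 <;> push_cast <;> ring
  · convert hf (k + 2) (by omega) le_rfl using 2 <;> push_cast <;> ring

theorem integral_gridCell {v w : ℝ → ℝ} (hv : Continuous v) (hw : Continuous w) {h : ℝ}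
    (hh : 0 ≤ h) {α β : ℕ → ℝ} {k : ℕ}
    (hvα : ∀ j, k ≤ j → j ≤ k + 2 → HasSlopeOn v (α j) (Icc (j * h - h) (j * h)))
    (hwβ : ∀ j, k ≤ j → j ≤ k + 2 → HasSlopeOn w (β j) (Icc (j * h - h) (j * h))) :
    ∫ x in (k : ℝ) * h..((k + 1 : ℕ) : ℝ) * h, ∫ y in x - h..x + h, (v y - v x) * (w y - w x) =
      h ^ 4 * cellEnergy α β k := by
  obtain ⟨hv₀, hv₁, hv₂⟩ := hasSlopeOn_three_cells hvα
  obtain ⟨hw₀, hw₁, hw₂⟩ := hasSlopeOn_three_cells hwβ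
  rw [Nat.cast_succ, add_one_mul]
  exact integral_cell hv hw hh hv₀ hv₁ hv₂ hw₀ hw₁ hw₂

theorem sum_Icc_one_eq_sum_range (f : ℕ → ℝ) (n : ℕ) :
    ∑ i ∈ Finset.Icc 1 n, f i = ∑ k ∈ Finset.range n, f (k + 1) := by
  rw [Finset.range_eq_Ico, Finset.sum_Ico_add' f 0 n 1, zero_add, Finset.Ico_add_one_right_eq_Icc]

theorem sum_range_cellEnergy {α β : ℕ → ℝ} {N : ℕ}
    (hα : ∀ j ≤ N + 1, j ≤ 1 ∨ N ≤ j → α j = 0) (hβ : ∀ j ≤ N + 1, j ≤ 1 ∨ N ≤ j → β j = 0) :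
    ∑ k ∈ Finset.range N, cellEnergy α β k =
      2 / 3 * ∑ i ∈ Finset.Icc 1 N, α i * β i -
        1 / 12 * ∑ i ∈ Finset.Icc 1 (N - 1), (α (i + 1) - α i) * (β (i + 1) - β i) := by
  set P : ℕ → ℝ := fun i => α i * β i
  set D : ℕ → ℝ := fun i => (α (i + 1) - α i) * (β (i + 1) - β i)
  -- The last summand is a second difference of `P`; it telescopes to boundary terms.
  have hsplit (k : ℕ) : cellEnergy α β k =
      2 / 3 * P (k + 1) - (D k + D (k + 1)) / 24 +
        ((P (k + 2) - P (k + 1)) - (P (k + 1) - P k)) / 8 := by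
    simp only [cellEnergy, P, D]; ring
  rw [Finset.sum_congr rfl fun k _ => hsplit k, Finset.sum_add_distrib, Finset.sum_sub_distrib,
    ← Finset.mul_sum, ← Finset.sum_div, ← Finset.sum_div, Finset.sum_add_distrib,
    Finset.sum_range_sub (fun k => P (k + 1) - P k), sum_Icc_one_eq_sum_range]
  rcases N with _ | n
  · simp
  · rw [Finset.sum_range_succ' D, Finset.sum_range_succ (fun k => D (k + 1)),
      sum_Icc_one_eq_sum_range, Nat.add_sub_cancel]
    have hboundary : α 0 = 0 ∧ α 1 = 0 ∧ α (n + 1) = 0 ∧ α (n + 1 + 1) = 0 ∧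
        β 0 = 0 ∧ β 1 = 0 ∧ β (n + 1) = 0 ∧ β (n + 1 + 1) = 0 :=
      ⟨hα 0 (by omega) (by omega), hα 1 (by omega) (by omega), hα _ (by omega) (by omega),
        hα _ le_rfl (by omega), hβ 0 (by omega) (by omega), hβ 1 (by omega) (by omega),
        hβ _ (by omega) (by omega), hβ _ le_rfl (by omega)⟩
    simp only [P, D, zero_add, hboundary]
    ring

theorem sum_range_cellEnergy_indicator {a b : ℕ → ℝ} {N : ℕ}
    (ha : ∀ j ≤ N + 1, j ≤ 1 ∨ N ≤ j → (Icc 1 N).indicator a j = 0)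
    (hb : ∀ j ≤ N + 1, j ≤ 1 ∨ N ≤ j → (Icc 1 N).indicator b j = 0) :
    ∑ k ∈ Finset.range N, cellEnergy ((Icc 1 N).indicator a) ((Icc 1 N).indicator b) k =
      2 / 3 * ∑ i ∈ Finset.Icc 1 N, a i * b i -
        1 / 12 * ∑ i ∈ Finset.Icc 1 (N - 1), (a (i + 1) - a i) * (b (i + 1) - b i) := by
  rw [sum_range_cellEnergy ha hb]
  congr 2 <;> refine Finset.sum_congr rfl fun i hi => ?_ <;> rw [Finset.mem_Icc] at hi
  · rw [indicator_of_mem (s := Icc 1 N) hi, indicator_of_mem (s := Icc 1 N) hi]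
  · have hi₀ : i ∈ Icc 1 N := by rw [mem_Icc]; omega
    have hi₁ : i + 1 ∈ Icc 1 N := by rw [mem_Icc]; omega
    rw [indicator_of_mem hi₀, indicator_of_mem hi₀, indicator_of_mem hi₁, indicator_of_mem hi₁]

section Grid

variable {f : ℝ → ℝ} {c : ℕ → ℝ} {h : ℝ} {N : ℕ}

theorem eq_zero_of_abs_sub_lt_of_notMem_Ioc
    (hf0 : ∀ x : ℝ, x ≤ h ∨ ((N : ℝ) - 1) * h ≤ x → f x = 0) {x y : ℝ} (hxy : |y - x| < h)
    (hy : y ∉ Ioc 0 (N * h)) : f y = 0 ∧ f x = 0 := by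
  rw [abs_sub_lt_iff] at hxy
  rw [mem_Ioc, not_and_or, not_lt, not_le] at hy
  rcases hy with hy | hy
  · exact ⟨hf0 y (Or.inl (by linarith)), hf0 x (Or.inl (by linarith))⟩
  · exact ⟨hf0 y (Or.inr (by linarith)), hf0 x (Or.inr (by linarith))⟩

theorem hasSlopeOn_indicator
    (hf0 : ∀ x : ℝ, x ≤ h ∨ ((N : ℝ) - 1) * h ≤ x → f x = 0)
    (hfc : ∀ i ∈ Finset.Icc 1 N, ∀ x ∈ Icc (((i : ℝ) - 1) * h) ((i : ℝ) * h),
      f x = f (((i : ℝ) - 1) * h) + c i * (x - ((i : ℝ) - 1) * h))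
    {j : ℕ} (hj : j ≤ N + 1) :
    HasSlopeOn f ((Icc 1 N).indicator c j) (Icc (j * h - h) (j * h)) := by
  by_cases hjN : j ∈ Icc 1 N
  · rw [indicator_of_mem hjN, show (j : ℝ) * h - h = ((j : ℝ) - 1) * h by ring]
    exact HasSlopeOn.of_eq_add_mul (hfc j (Finset.mem_Icc.2 hjN))
  · rw [indicator_of_notMem hjN]
    refine HasSlopeOn.of_eqOn_zero fun x hx => hf0 x ?_
    obtain rfl | rfl : j = 0 ∨ j = N + 1 := by rw [mem_Icc] at hjN; omega
    · left; push_cast at hx; linarith [hx.1, hx.2]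
    · right; push_cast at hx; linarith [hx.1, hx.2]

theorem indicator_eq_zero_of_boundary (hh : 0 < h)
    (hf0 : ∀ x : ℝ, x ≤ h ∨ ((N : ℝ) - 1) * h ≤ x → f x = 0)
    (hfc : ∀ i ∈ Finset.Icc 1 N, ∀ x ∈ Icc (((i : ℝ) - 1) * h) ((i : ℝ) * h),
      f x = f (((i : ℝ) - 1) * h) + c i * (x - ((i : ℝ) - 1) * h))
    {j : ℕ} (hj : j ≤ N + 1) (hjb : j ≤ 1 ∨ N ≤ j) : (Icc 1 N).indicator c j = 0 := by
  refine (hasSlopeOn_indicator hf0 hfc hj).eq_zero_of_eq (by linarith) ?_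
  rcases hjb with hjb | hjb
  · have : (j : ℝ) ≤ 1 := by exact_mod_cast hjb
    rw [hf0 _ (Or.inl (by nlinarith)), hf0 _ (Or.inl (by nlinarith))]
  · have : (N : ℝ) ≤ j := by exact_mod_cast hjb
    rw [hf0 _ (Or.inr (by nlinarith)), hf0 _ (Or.inr (by nlinarith))]

end Grid

theorem nonlocal_bilinear_form_piecewise_linear_general
    (h : ℝ) (hh : 0 < h) (N : ℕ)
    (v w : ℝ → ℝ) (hv : Continuous v) (hw : Continuous w)
    (a b : ℕ → ℝ)
    (hv0 : ∀ x : ℝ, x ≤ h ∨ ((N : ℝ) - 1) * h ≤ x → v x = 0)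
    (hw0 : ∀ x : ℝ, x ≤ h ∨ ((N : ℝ) - 1) * h ≤ x → w x = 0)
    (hva : ∀ i ∈ Finset.Icc 1 N, ∀ x ∈ Set.Icc (((i : ℝ) - 1) * h) ((i : ℝ) * h),
      v x = v (((i : ℝ) - 1) * h) + a i * (x - ((i : ℝ) - 1) * h))
    (hwb : ∀ i ∈ Finset.Icc 1 N, ∀ x ∈ Set.Icc (((i : ℝ) - 1) * h) ((i : ℝ) * h),
      w x = w (((i : ℝ) - 1) * h) + b i * (x - ((i : ℝ) - 1) * h)) :
    (∫ x in (0 : ℝ)..(N : ℝ) * h, ∫ y in (0 : ℝ)..(N : ℝ) * h,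
        (if |y - x| < h then h⁻¹ ^ 3 * ((v y - v x) * (w y - w x)) else 0)) =
      (2 * h / 3) * ∑ i ∈ Finset.Icc 1 N, a i * b i -
        (h / 12) * ∑ i ∈ Finset.Icc 1 (N - 1), (a (i + 1) - a i) * (b (i + 1) - b i) := by
  have hinner (x : ℝ) : ∫ y in (0 : ℝ)..(N : ℝ) * h,
      (if |y - x| < h then h⁻¹ ^ 3 * ((v y - v x) * (w y - w x)) else 0) =
        h⁻¹ ^ 3 * ∫ y in x - h..x + h, (v y - v x) * (w y - w x) := by
    rw [integral_ite_abs_sub_lt (by positivity) hh.le, intervalIntegral.integral_const_mul]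
    intro y hxy hy
    obtain ⟨hvy, hvx⟩ := eq_zero_of_abs_sub_lt_of_notMem_Ioc hv0 hxy hy
    obtain ⟨hwy, hwx⟩ := eq_zero_of_abs_sub_lt_of_notMem_Ioc hw0 hxy hy
    simp [hvy, hvx, hwy, hwx]
  have hF := continuous_integral_sub_add (G := fun x y => (v y - v x) * (w y - w x)) (by fun_prop) h
  have hcells := intervalIntegral.sum_integral_adjacent_intervals (a := fun k : ℕ => (k : ℝ) * h)
    (n := N) (μ := volume) fun k _ => hF.intervalIntegrable _ _
  have hcell (k : ℕ) (hk : k ∈ Finset.range N) :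
      ∫ x in (k : ℝ) * h..((k + 1 : ℕ) : ℝ) * h, ∫ y in x - h..x + h, (v y - v x) * (w y - w x) =
        h ^ 4 * cellEnergy ((Icc 1 N).indicator a) ((Icc 1 N).indicator b) k := by
    have hk := Finset.mem_range.1 hk
    exact integral_gridCell hv hw hh.le (fun j _ hj => hasSlopeOn_indicator hv0 hva (by omega))
      (fun j _ hj => hasSlopeOn_indicator hw0 hwb (by omega))
  simp only [Nat.cast_zero, zero_mul] at hcells
  rw [intervalIntegral.integral_congr fun x _ => hinner x, intervalIntegral.integral_const_mul,
    ← hcells, Finset.sum_congr rfl hcell, ← Finset.mul_sum,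
    sum_range_cellEnergy_indicator (fun j hj hjb => indicator_eq_zero_of_boundary hh hv0 hva hj hjb)
      (fun j hj hjb => indicator_eq_zero_of_boundary hh hw0 hwb hj hjb)]
  field_simp

/-- Exact evaluation of the nonlocal energy bilinear form with constant kernel
`γ(x,y) = h⁻³·1_{|y−x|<h}` (horizon `δ = h`) on a uniform one-dimensional grid, for
continuous piecewise-linear functions `v, w` vanishing on the first and last element:
`D(v,w) = (2h/3)·∑ aᵢbᵢ − (h/12)·∑ (aᵢ₊₁−aᵢ)(bᵢ₊₁−bᵢ)`. -/
theorem nonlocal_bilinear_form_piecewise_linear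
    (h : ℝ) (hh : 0 < h) (N : ℕ) (hN : 3 ≤ N)
    (v w : ℝ → ℝ) (hv : Continuous v) (hw : Continuous w)
    (a b : ℕ → ℝ)
    (hv0 : ∀ x : ℝ, x ≤ h ∨ ((N : ℝ) - 1) * h ≤ x → v x = 0)
    (hw0 : ∀ x : ℝ, x ≤ h ∨ ((N : ℝ) - 1) * h ≤ x → w x = 0)
    (hva : ∀ i ∈ Finset.Icc 1 N, ∀ x ∈ Set.Icc (((i : ℝ) - 1) * h) ((i : ℝ) * h),
      v x = v (((i : ℝ) - 1) * h) + a i * (x - ((i : ℝ) - 1) * h))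
    (hwb : ∀ i ∈ Finset.Icc 1 N, ∀ x ∈ Set.Icc (((i : ℝ) - 1) * h) ((i : ℝ) * h),
      w x = w (((i : ℝ) - 1) * h) + b i * (x - ((i : ℝ) - 1) * h)) :
    (∫ x in (0 : ℝ)..(N : ℝ) * h, ∫ y in (0 : ℝ)..(N : ℝ) * h,
        (if |y - x| < h then h⁻¹ ^ 3 * ((v y - v x) * (w y - w x)) else 0)) =
      (2 * h / 3) * ∑ i ∈ Finset.Icc 1 N, a i * b i -
        (h / 12) * ∑ i ∈ Finset.Icc 1 (N - 1), (a (i + 1) - a i) * (b (i + 1) - b i) :=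
  nonlocal_bilinear_form_piecewise_linear_general h hh N v w hv hw a b hv0 hw0 hva hwb
end

section
/- Let h > 0 and N ∈ ℕ with N ≥ 3. Let v, w : ℝ → ℝ be continuous, equal to 0 on (−∞, h] ∪ [(N−1)h, ∞), and affine on each element [(i−1)h, i·h] with slope a_i (for v) and b_i (for w), i = 1,…,N. Let K ∈ ℕ, K ≥ 1, let 0 < c_1 < … < c_K < h, and let ω_1,…,ω_K ≥ 0 satisfy the exactness condition 2·∑_{k=1}^{K} ω_k·c_k² = 2h³/3. Define D(v,w) := ∫₀^{Nh} ∫₀^{Nh} 1_{{|y−x|<h}} · h^{−3} · (v(y) − v(x))(w(y) − w(x)) dy dx and D^h(v,w) := ∫₀^{Nh} h^{−3} ∑_{k=1}^{K} [(v(x + c_k) − v(x))(w(x + c_k) − w(x)) + (v(x − c_k) − v(x))(w(x − c_k) − w(x))]·ω_k dx. Then D(v,w) − D^h(v,w) = ((1/(3h³))·∑_{k=1}^{K} ω_k·c_k³ − h/12) · ∑_{i=1}^{N−1} (a_{i+1} − a_i)(b_{i+1} − b_i); in particular |D(v,w) − D^h(v,w)| ≤ (7h/36)·∑_{i=1}^{N−1}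 |a_{i+1} − a_i|·|b_{i+1} − b_i|. -/
/-!
With `φₜ(x) = (v(x+t) - v x)(w(x+t) - w x)` and `E(t) = ∫ φₜ`, the substitution `y = x + t` and
Fubini turn `D(v,w)` into `h⁻³ ∫_{-h}^{h} E(t) dt`, while `E` is even, so that
`Dʰ(v,w) = h⁻³ ∑ 2 E(cₖ) ωₖ`.
For `0 ≤ t ≤ h` only neighbouring elements interact, and integrating element by element gives
`E(t) = t² h P - t³ S / 6` with `P = ∑ aᵢbᵢ` and `S = ∑ (aᵢ₊₁ - aᵢ)(bᵢ₊₁ - bᵢ)`; the boundary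
terms telescope away because `a₁ = a_N = 0`. The quadrature integrates the `t²`-part exactly, so
the error is the quadrature error of `t³`, times `-S / 6`.
-/

open MeasureTheory Set intervalIntegral

namespace NonlocalQuadrature

def incrementProduct (v w : ℝ → ℝ) (t x : ℝ) : ℝ := (v (x + t) - v x) * (w (x + t) - w x)

noncomputable def incrementEnergy (v w : ℝ → ℝ) (t : ℝ) : ℝ := ∫ x, incrementProduct v w t x

def VanishesOffIoo (l r : ℝ) (v : ℝ → ℝ) : Prop := ∀ x : ℝ, x ≤ l ∨ r ≤ x → v x = 0

def IsElementwiseAffine (h : ℝ) (N : ℕ) (v : ℝ → ℝ) (a : ℕ → ℝ) : Prop :=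
  ∀ i ∈ Finset.Icc 1 N, ∀ x ∈ Set.Icc (((i : ℝ) - 1) * h) ((i : ℝ) * h),
    v x = v (((i : ℝ) - 1) * h) + a i * (x - ((i : ℝ) - 1) * h)

variable {v w : ℝ → ℝ}

theorem continuous_incrementProduct_uncurry (hv : Continuous v) (hw : Continuous w) :
    Continuous fun p : ℝ × ℝ => incrementProduct v w p.2 p.1 := by
  unfold incrementProduct; fun_prop

theorem continuous_incrementProduct (hv : Continuous v) (hw : Continuous w) (t : ℝ) :
    Continuous (incrementProduct v w t) := by
  unfold incrementProduct; fun_prop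

theorem incrementEnergy_neg (v w : ℝ → ℝ) (t : ℝ) :
    incrementEnergy v w (-t) = incrementEnergy v w t := by
  rw [incrementEnergy, ← integral_add_right_eq_self _ t]
  congr 1 with x
  simp only [incrementProduct, add_neg_cancel_right]
  ring

section Vanishing

variable {l r : ℝ}

theorem incrementProduct_eq_zero (hv : VanishesOffIoo l r v) {t x : ℝ}
    (hx : x ≤ l ∧ x + t ≤ l ∨ r ≤ x ∧ r ≤ x + t) : incrementProduct v w t x = 0 := by
  obtain ⟨hx, hxt⟩ | ⟨hx, hxt⟩ := hx <;>
    simp [incrementProduct, hv x (by simp [hx]), hv (x + t) (by simp [hxt])]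

theorem integral_incrementProduct_eq_incrementEnergy (hv : VanishesOffIoo l r v) {A B t : ℝ}
    (hAB : A ≤ B) (hA : A ≤ l) (hAt : A + t ≤ l) (hB : r ≤ B) (hBt : r ≤ B + t) :
    ∫ x in A..B, incrementProduct v w t x = incrementEnergy v w t := by
  rw [integral_of_le hAB]
  refine setIntegral_eq_integral_of_forall_compl_eq_zero fun x hx => ?_
  rw [mem_Ioc, not_and_or, not_lt, not_le] at hx
  refine incrementProduct_eq_zero hv ?_
  rcases hx with hx | hx
  · exact Or.inl ⟨by linarith, by linarith⟩
  · exact Or.inr ⟨by linarith, by linarith⟩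

theorem integral_ball_eq_integral_incrementProduct (hv : VanishesOffIoo l r v) {A B h : ℝ}
    (hh : 0 ≤ h) (hAB : A ≤ B) (hA : A + h ≤ l) (hB : r + h ≤ B) (κ x : ℝ) :
    ∫ y in A..B, (if |y - x| < h then κ * ((v y - v x) * (w y - w x)) else 0) =
      κ * ∫ t in -h..h, incrementProduct v w t x := by
  set g : ℝ → ℝ := fun y => if |y - x| < h then κ * ((v y - v x) * (w y - w x)) else 0
  have hg_shift (t : ℝ) :
      g (x + t) = (Ioo (-h) h).indicator (fun t => κ * incrementProduct v w t x) t := by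
    simp only [g, indicator, mem_Ioo, add_sub_cancel_left, abs_lt, incrementProduct]
  have hg_zero : ∀ y ∉ Ioc A B, g y = 0 := by
    intro y hy
    rw [mem_Ioc, not_and_or, not_lt, not_le] at hy
    by_cases hyx : |y - x| < h
    · obtain ⟨h₁, h₂⟩ := abs_lt.1 hyx
      rcases hy with hy | hy
      · simp [g, hyx, hv y (Or.inl (by linarith)), hv x (Or.inl (by linarith))]
      · simp [g, hyx, hv y (Or.inr (by linarith)), hv x (Or.inr (by linarith))]
    · simp [g, hyx]
  calc ∫ y in A..B, g y = ∫ y, g y := by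
        rw [integral_of_le hAB]; exact setIntegral_eq_integral_of_forall_compl_eq_zero hg_zero
    _ = ∫ t, g (x + t) := (integral_add_left_eq_self g x).symm
    _ = ∫ t in Ioo (-h) h, κ * incrementProduct v w t x := by
        simp_rw [hg_shift]; exact integral_indicator measurableSet_Ioo
    _ = κ * ∫ t in -h..h, incrementProduct v w t x := by
        rw [integral_of_le (by linarith), integral_Ioc_eq_integral_Ioo,
          MeasureTheory.integral_const_mul]

theorem integral_integral_ball_eq_integral_incrementEnergy (hvc : Continuous v)
    (hwc : Continuous w) (hv : VanishesOffIoo l r v) {A B h : ℝ} (hh : 0 ≤ h) (hAB : A ≤ B)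
    (hA : A + h ≤ l) (hB : r + h ≤ B) (κ : ℝ) :
    ∫ x in A..B, ∫ y in A..B, (if |y - x| < h then κ * ((v y - v x) * (w y - w x)) else 0) =
      κ * ∫ t in -h..h, incrementEnergy v w t := by
  simp_rw [integral_ball_eq_integral_incrementProduct hv hh hAB hA hB κ]
  rw [intervalIntegral.integral_const_mul, intervalIntegral_intervalIntegral_swap]
  · refine congrArg _ (integral_congr fun t ht => ?_)
    rw [uIcc_of_le (by linarith), mem_Icc] at ht
    exact integral_incrementProduct_eq_incrementEnergy hv hAB (by linarith) (by linarith)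
      (by linarith) (by linarith)
  · exact ((continuous_incrementProduct_uncurry hvc hwc).continuousOn.integrableOn_compact
      (isCompact_uIcc.prod isCompact_uIcc)).mono_set (prod_mono uIoc_subset_uIcc uIoc_subset_uIcc)

theorem integral_quadrature_eq_sum_incrementEnergy (hvc : Continuous v) (hwc : Continuous w)
    (hv : VanishesOffIoo l r v) {A B h : ℝ} (hAB : A ≤ B) (hA : A + h ≤ l) (hB : r + h ≤ B)
    (κ : ℝ) {ι : Type*} (s : Finset ι) (c ω : ι → ℝ) (hc : ∀ k ∈ s, c k ∈ Icc 0 h) :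
    ∫ x in A..B, κ * ∑ k ∈ s, ((v (x + c k) - v x) * (w (x + c k) - w x) +
        (v (x - c k) - v x) * (w (x - c k) - w x)) * ω k =
      κ * ∑ k ∈ s, 2 * incrementEnergy v w (c k) * ω k := by
  have hφ := continuous_incrementProduct hvc hwc
  have hsym : ∀ x k, (v (x + c k) - v x) * (w (x + c k) - w x) +
      (v (x - c k) - v x) * (w (x - c k) - w x) =
        incrementProduct v w (c k) x + incrementProduct v w (-c k) x := by
    simp [incrementProduct, sub_eq_add_neg]
  simp only [hsym]
  have hterm (k : ι) : Continuous fun x =>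
      (incrementProduct v w (c k) x + incrementProduct v w (-c k) x) * ω k :=
    ((hφ _).add (hφ _)).mul continuous_const
  rw [intervalIntegral.integral_const_mul,
    intervalIntegral.integral_finsetSum fun k _ => (hterm k).intervalIntegrable _ _]
  refine congrArg _ (Finset.sum_congr rfl fun k hk => ?_)
  obtain ⟨hc₀, hch⟩ := hc k hk
  rw [intervalIntegral.integral_mul_const,
    integral_add ((hφ (c k)).intervalIntegrable _ _) ((hφ (-c k)).intervalIntegrable _ _),
    integral_incrementProduct_eq_incrementEnergy hv hAB (by linarith) (by linarith) (by linarith)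
      (by linarith),
    integral_incrementProduct_eq_incrementEnergy hv hAB (by linarith) (by linarith) (by linarith)
      (by linarith),
    incrementEnergy_neg]
  ring

end Vanishing

theorem integral_affine_mul_affine (A B C D t : ℝ) :
    ∫ u in (0 : ℝ)..t, (A + B * u) * (C + D * u) =
      A * C * t + (A * D + B * C) * t ^ 2 / 2 + B * D * t ^ 3 / 3 := by
  have hF : ∀ u, HasDerivAt (fun u => A * C * u + (A * D + B * C) * u ^ 2 / 2 + B * D * u ^ 3 / 3)
      ((A + B * u) * (C + D * u)) u := fun u =>
    ((((hasDerivAt_id' u).const_mul (A * C)).add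
      (((hasDerivAt_pow 2 u).const_mul (A * D + B * C)).div_const 2)).add
      (((hasDerivAt_pow 3 u).const_mul (B * D)).div_const 3)).congr_deriv (by norm_num; ring)
  rw [integral_eq_sub_of_hasDerivAt (fun u _ => hF u)
    ((by fun_prop : Continuous _).intervalIntegrable _ _)]
  ring

section Affine

variable {p h t α β : ℝ}

theorem increment_of_affine (hv : ∀ x ∈ Icc p (p + h), v x = v p + α * (x - p))
    {x : ℝ} (ht : 0 ≤ t) (hx : x ∈ Icc p (p + h - t)) : v (x + t) - v x = α * t := by
  rw [hv x ⟨hx.1, by linarith [hx.2]⟩, hv (x + t) ⟨by linarith [hx.1], by linarith [hx.2]⟩]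
  ring

theorem increment_of_affine_kink (hv₁ : ∀ x ∈ Icc p (p + h), v x = v p + α * (x - p))
    (hv₂ : ∀ x ∈ Icc (p + h) (p + h + h), v x = v (p + h) + β * (x - (p + h)))
    {x : ℝ} (ht : t ≤ h) (hx : x ∈ Icc (p + h - t) (p + h)) :
    v (x + t) - v x = α * t + (β - α) * (x - (p + h - t)) := by
  have hth : 0 ≤ t := by linarith [hx.1, hx.2]
  rw [hv₁ x ⟨by linarith [hx.1], hx.2⟩, hv₂ (x + t) ⟨by linarith [hx.1], by linarith [hx.2]⟩,
    hv₁ (p + h) ⟨by linarith, le_rfl⟩]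
  ring

theorem integral_incrementProduct_of_affine (hvc : Continuous v) (hwc : Continuous w)
    {α' β' : ℝ} (ht₀ : 0 ≤ t) (hth : t ≤ h)
    (hv₁ : ∀ x ∈ Icc p (p + h), v x = v p + α * (x - p))
    (hv₂ : ∀ x ∈ Icc (p + h) (p + h + h), v x = v (p + h) + β * (x - (p + h)))
    (hw₁ : ∀ x ∈ Icc p (p + h), w x = w p + α' * (x - p))
    (hw₂ : ∀ x ∈ Icc (p + h) (p + h + h), w x = w (p + h) + β' * (x - (p + h))) :
    ∫ x in p..p + h, incrementProduct v w t x =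
      h * t ^ 2 * (α * α') - t ^ 3 / 6 * ((β - α) * (β' - α')) + t ^ 3 / 2 * (β * β' - α * α') := by
  have hφ := (continuous_incrementProduct hvc hwc t).intervalIntegrable (μ := volume)
  have hflat : EqOn (incrementProduct v w t) (fun _ => α * t * (α' * t)) (uIcc p (p + h - t)) := by
    intro x hx
    rw [uIcc_of_le (by linarith)] at hx
    rw [incrementProduct, increment_of_affine hv₁ ht₀ hx, increment_of_affine hw₁ ht₀ hx]
  have hkink : EqOn (incrementProduct v w t)
      (fun x => (α * t + (β - α) * (x - (p + h - t))) * (α' * t + (β' - α') * (x - (p + h - t))))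
      (uIcc (p + h - t) (p + h)) := by
    intro x hx
    rw [uIcc_of_le (by linarith)] at hx
    rw [incrementProduct, increment_of_affine_kink hv₁ hv₂ hth hx,
      increment_of_affine_kink hw₁ hw₂ hth hx]
  rw [← integral_add_adjacent_intervals (hφ p (p + h - t)) (hφ _ _), integral_congr hflat,
    integral_congr hkink, intervalIntegral.integral_const,
    integral_comp_sub_right (fun u => (α * t + (β - α) * u) * (α' * t + (β' - α') * u)),
    sub_self, show p + h - (p + h - t) = t by ring, integral_affine_mul_affine]
  simp only [smul_eq_mul]
  ring

theorem slope_eq_zero_of_affine (hh : 0 < h) (hv : ∀ x ∈ Icc p (p + h), v x = v p + α * (x - p))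
    (hp : v p = 0) (hq : v (p + h) = 0) : α = 0 := by
  have := hv (p + h) ⟨by linarith, le_rfl⟩
  rw [hp, hq, add_sub_cancel_left, zero_add] at this
  exact (mul_eq_zero.1 this.symm).resolve_right hh.ne'

end Affine

theorem IsElementwiseAffine.affineOn_element {h : ℝ} {N : ℕ} {a : ℕ → ℝ}
    (hv : IsElementwiseAffine h N v a) {j : ℕ} (hj : j < N) :
    ∀ x ∈ Icc ((j : ℝ) * h) (j * h + h), v x = v (j * h) + a (j + 1) * (x - j * h) := by
  simpa only [Nat.cast_add, Nat.cast_one, add_sub_cancel_right, add_one_mul] using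
    hv (j + 1) (Finset.mem_Icc.2 ⟨by omega, hj⟩)

theorem sum_Icc_one_eq_sum_range {M : Type*} [AddCommMonoid M] (f : ℕ → M) (n : ℕ) :
    ∑ i ∈ Finset.Icc 1 n, f i = ∑ i ∈ Finset.range n, f (i + 1) := by
  rw [← Finset.Ico_add_one_right_eq_Icc, Finset.sum_Ico_eq_sum_range, Nat.add_sub_cancel]
  simp only [add_comm 1]

theorem incrementEnergy_eq_of_isElementwiseAffine {h : ℝ} {N : ℕ} {a b : ℕ → ℝ} (hh : 0 < h)
    (hN : 1 ≤ N) (hvc : Continuous v) (hwc : Continuous w) (hv : VanishesOffIoo h ((N - 1) * h) v)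
    (hva : IsElementwiseAffine h N v a) (hwb : IsElementwiseAffine h N w b) {t : ℝ}
    (ht : t ∈ Icc 0 h) :
    incrementEnergy v w t = t ^ 2 * h * ∑ i ∈ Finset.Icc 1 (N - 1), a i * b i -
      t ^ 3 / 6 * ∑ i ∈ Finset.Icc 1 (N - 1), (a (i + 1) - a i) * (b (i + 1) - b i) := by
  obtain ⟨ht₀, hth⟩ := ht
  have hN' : ((N - 1 : ℕ) : ℝ) * h = ((N : ℝ) - 1) * h := by rw [Nat.cast_pred hN]
  have ha₁ : a 1 = 0 := by
    refine slope_eq_zero_of_affine hh ?_ (hv 0 (Or.inl hh.le)) (hv _ (Or.inl (zero_add h).le))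
    simpa using hva.affineOn_element (j := 0) (by omega)
  have ha_N : a N = 0 := by
    have hlast := hva.affineOn_element (j := N - 1) (by omega)
    rw [Nat.sub_add_cancel hN, hN'] at hlast
    exact slope_eq_zero_of_affine hh hlast (hv _ (Or.inr le_rfl))
      (hv _ (Or.inr (by linarith)))
  have helem : ∀ j ∈ Finset.range (N - 1),
      ∫ x in (j : ℝ) * h..((j + 1 : ℕ) : ℝ) * h, incrementProduct v w t x =
        h * t ^ 2 * (a (j + 1) * b (j + 1)) -
          t ^ 3 / 6 * ((a (j + 1 + 1) - a (j + 1)) * (b (j + 1 + 1) - b (j + 1))) +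
          t ^ 3 / 2 * (a (j + 1 + 1) * b (j + 1 + 1) - a (j + 1) * b (j + 1)) := by
    intro j hj
    have hj : j + 1 < N := by rw [Finset.mem_range] at hj; omega
    have hnext : ∀ {u : ℝ → ℝ} {e : ℕ → ℝ}, IsElementwiseAffine h N u e →
        ∀ x ∈ Icc ((j : ℝ) * h + h) (j * h + h + h),
          u x = u (j * h + h) + e (j + 1 + 1) * (x - (j * h + h)) := fun hu => by
      simpa only [Nat.cast_add, Nat.cast_one, add_one_mul] using hu.affineOn_element hj
    rw [Nat.cast_succ, add_one_mul]
    exact integral_incrementProduct_of_affine hvc hwc ht₀ hth (hva.affineOn_element (by omega))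
      (hnext hva) (hwb.affineOn_element (by omega)) (hnext hwb)
  have hsplit := sum_integral_adjacent_intervals (μ := volume)
    (fun k _ => (continuous_incrementProduct hvc hwc t).intervalIntegrable (μ := volume)
      ((k : ℝ) * h) (((k + 1 : ℕ) : ℝ) * h)) (n := N - 1)
  rw [Nat.cast_zero, zero_mul, Finset.sum_congr rfl helem] at hsplit
  rw [← integral_incrementProduct_eq_incrementEnergy hv (A := 0) (B := ((N - 1 : ℕ) : ℝ) * h)
    (by positivity) hh.le (by linarith) hN'.ge (by linarith), ← hsplit,
    Finset.sum_add_distrib, Finset.sum_sub_distrib, ← Finset.mul_sum, ← Finset.mul_sum,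
    ← Finset.mul_sum, Finset.sum_range_sub (fun j => a (j + 1) * b (j + 1)),
    Nat.sub_add_cancel hN, ha₁, ha_N, sum_Icc_one_eq_sum_range, sum_Icc_one_eq_sum_range]
  ring

theorem integral_symm_eq_two_mul_of_even {E g : ℝ → ℝ} {h : ℝ} (hh : 0 ≤ h) (hg : Continuous g)
    (hE : ∀ t, E (-t) = E t) (hEg : ∀ t ∈ Icc 0 h, E t = g t) :
    ∫ t in -h..h, E t = 2 * ∫ t in 0..h, g t := by
  have hgabs : Continuous fun t => g |t| := hg.comp continuous_abs
  have hE_abs : EqOn E (fun t => g |t|) (uIcc (-h) h) := by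
    intro t ht
    rw [uIcc_of_le (by linarith), mem_Icc, ← abs_le] at ht
    dsimp only
    rw [← hEg |t| ⟨abs_nonneg t, ht⟩]
    rcases abs_choice t with habs | habs <;> rw [habs]
    exact (hE t).symm
  have hpos : ∫ t in 0..h, g |t| = ∫ t in 0..h, g t := integral_congr fun t ht => by
    rw [uIcc_of_le hh] at ht
    simp only [abs_of_nonneg ht.1]
  have hneg : ∫ t in -h..0, g |t| = ∫ t in 0..h, g t := by
    simpa only [abs_neg, neg_zero, hpos] using
      (integral_comp_neg (a := 0) (b := h) (fun t => g |t|)).symm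
  rw [integral_congr hE_abs, ← integral_add_adjacent_intervals (b := 0)
    (hgabs.intervalIntegrable _ _) (hgabs.intervalIntegrable _ _), hneg, hpos]
  ring

theorem integral_symm_incrementEnergy {h P S : ℝ} (hh : 0 ≤ h)
    (hE : ∀ t ∈ Icc 0 h, incrementEnergy v w t = t ^ 2 * h * P - t ^ 3 / 6 * S) :
    ∫ t in -h..h, incrementEnergy v w t = 2 * h ^ 4 / 3 * P - h ^ 4 / 12 * S := by
  rw [integral_symm_eq_two_mul_of_even hh (by fun_prop) (incrementEnergy_neg v w) hE,
    intervalIntegral.integral_sub, intervalIntegral.integral_mul_const,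
    intervalIntegral.integral_mul_const, intervalIntegral.integral_mul_const,
    intervalIntegral.integral_div, integral_pow, integral_pow]
  · ring
  all_goals exact Continuous.intervalIntegrable (by fun_prop) _ _

theorem sum_incrementEnergy_quadrature {ι : Type*} {s : Finset ι} {c ω : ι → ℝ} {h P S : ℝ}
    (hc : ∀ k ∈ s, c k ∈ Icc 0 h)
    (hE : ∀ t ∈ Icc 0 h, incrementEnergy v w t = t ^ 2 * h * P - t ^ 3 / 6 * S) :
    ∑ k ∈ s, 2 * incrementEnergy v w (c k) * ω k =
      2 * h * P * ∑ k ∈ s, ω k * c k ^ 2 - S / 3 * ∑ k ∈ s, ω k * c k ^ 3 := by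
  rw [Finset.mul_sum, Finset.mul_sum, ← Finset.sum_sub_distrib]
  exact Finset.sum_congr rfl fun k hk => by rw [hE _ (hc k hk)]; ring

theorem eq_mul_and_abs_le {x y z B C : ℝ} (hx : x = y * z) (hy : |y| ≤ B) (hz : |z| ≤ C) :
    x = y * z ∧ |x| ≤ B * C := by
  refine ⟨hx, ?_⟩
  rw [hx, abs_mul]
  exact mul_le_mul hy hz (abs_nonneg _) ((abs_nonneg _).trans hy)

theorem abs_quadrature_coeff_le {ι : Type*} {s : Finset ι} {c ω : ι → ℝ} {h : ℝ} (hh : 0 < h)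
    (hω : ∀ k ∈ s, 0 ≤ ω k) (hc : ∀ k ∈ s, c k ∈ Icc 0 h)
    (hexact : ∑ k ∈ s, ω k * c k ^ 2 = h ^ 3 / 3) :
    |1 / (3 * h ^ 3) * ∑ k ∈ s, ω k * c k ^ 3 - h / 12| ≤ 7 * h / 36 := by
  have h₀ : 0 ≤ ∑ k ∈ s, ω k * c k ^ 3 :=
    Finset.sum_nonneg fun k hk => mul_nonneg (hω k hk) (pow_nonneg (hc k hk).1 3)
  have h₁ : ∑ k ∈ s, ω k * c k ^ 3 ≤ h ^ 4 / 3 := calc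
    ∑ k ∈ s, ω k * c k ^ 3 ≤ ∑ k ∈ s, h * (ω k * c k ^ 2) := Finset.sum_le_sum fun k hk => by
      have := mul_le_mul_of_nonneg_left (hc k hk).2 (mul_nonneg (hω k hk) (sq_nonneg (c k)))
      linarith
    _ = h ^ 4 / 3 := by rw [← Finset.mul_sum, hexact]; ring
  have hh3 : 0 < 3 * h ^ 3 := by positivity
  rw [abs_le, one_div_mul_eq_div]
  constructor
  · have := div_nonneg h₀ hh3.le
    linarith
  · have : (∑ k ∈ s, ω k * c k ^ 3) / (3 * h ^ 3) ≤ h / 9 := by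
      rw [div_le_iff₀ hh3]
      nlinarith
    linarith

theorem mem_Icc_of_lt_succ {K : ℕ} {c : ℕ → ℝ} (hc : ∀ k, 1 ≤ k → k < K → c k < c (k + 1))
    {k : ℕ} (hk : k ∈ Finset.Icc 1 K) : c k ∈ Icc (c 1) (c K) := by
  have hmono : MonotoneOn c (Icc 1 K) := monotoneOn_of_le_succ ordConnected_Icc
    fun j _ hj hj' => by
      rw [Order.succ_eq_add_one, mem_Icc] at hj'
      exact (hc j hj.1 (by omega)).le
  obtain ⟨h₁, h₂⟩ := Finset.mem_Icc.1 hk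
  exact ⟨hmono ⟨le_rfl, by omega⟩ ⟨h₁, h₂⟩ h₁, hmono ⟨h₁, h₂⟩ ⟨by omega, le_rfl⟩ h₂⟩

end NonlocalQuadrature

open NonlocalQuadrature in
theorem quadrature_consistency_error_1d_general
    (h : ℝ) (hh : 0 < h) (N : ℕ) (hN : 3 ≤ N)
    (v w : ℝ → ℝ) (hv : Continuous v) (hw : Continuous w)
    (a b : ℕ → ℝ)
    (hv0 : ∀ x : ℝ, x ≤ h ∨ ((N : ℝ) - 1) * h ≤ x → v x = 0)
    (hva : ∀ i ∈ Finset.Icc 1 N, ∀ x ∈ Set.Icc (((i : ℝ) - 1) * h) ((i : ℝ) * h),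
      v x = v (((i : ℝ) - 1) * h) + a i * (x - ((i : ℝ) - 1) * h))
    (hwb : ∀ i ∈ Finset.Icc 1 N, ∀ x ∈ Set.Icc (((i : ℝ) - 1) * h) ((i : ℝ) * h),
      w x = w (((i : ℝ) - 1) * h) + b i * (x - ((i : ℝ) - 1) * h))
    (K : ℕ)
    (c ω : ℕ → ℝ)
    (hcpos : 0 < c 1)
    (hcmono : ∀ k : ℕ, 1 ≤ k → k < K → c k < c (k + 1))
    (hclt : c K < h)
    (hωnonneg : ∀ k ∈ Finset.Icc 1 K, 0 ≤ ω k)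
    (hexact : 2 * ∑ k ∈ Finset.Icc 1 K, ω k * (c k) ^ 2 = 2 * h ^ 3 / 3) :
    (∫ x in (0 : ℝ)..(N : ℝ) * h, ∫ y in (0 : ℝ)..(N : ℝ) * h,
          (if |y - x| < h then h⁻¹ ^ 3 * ((v y - v x) * (w y - w x)) else 0)) -
        (∫ x in (0 : ℝ)..(N : ℝ) * h,
          h⁻¹ ^ 3 * ∑ k ∈ Finset.Icc 1 K,
            ((v (x + c k) - v x) * (w (x + c k) - w x) +
              (v (x - c k) - v x) * (w (x - c k) - w x)) * ω k) =
      ((1 / (3 * h ^ 3)) * ∑ k ∈ Finset.Icc 1 K, ω k * (c k) ^ 3 - h / 12) *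
        ∑ i ∈ Finset.Icc 1 (N - 1), (a (i + 1) - a i) * (b (i + 1) - b i) ∧
    |(∫ x in (0 : ℝ)..(N : ℝ) * h, ∫ y in (0 : ℝ)..(N : ℝ) * h,
          (if |y - x| < h then h⁻¹ ^ 3 * ((v y - v x) * (w y - w x)) else 0)) -
        (∫ x in (0 : ℝ)..(N : ℝ) * h,
          h⁻¹ ^ 3 * ∑ k ∈ Finset.Icc 1 K,
            ((v (x + c k) - v x) * (w (x + c k) - w x) +
              (v (x - c k) - v x) * (w (x - c k) - w x)) * ω k)| ≤
      (7 * h / 36) * ∑ i ∈ Finset.Icc 1 (N - 1), |a (i + 1) - a i| * |b (i + 1) - b i| := by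
  have hc : ∀ k ∈ Finset.Icc 1 K, c k ∈ Set.Icc 0 h := fun k hk =>
    have hk := mem_Icc_of_lt_succ hcmono hk
    ⟨hcpos.le.trans hk.1, hk.2.trans hclt.le⟩
  have hmoment : ∑ k ∈ Finset.Icc 1 K, ω k * c k ^ 2 = h ^ 3 / 3 := by linarith
  have hE := fun t (ht : t ∈ Set.Icc 0 h) =>
    incrementEnergy_eq_of_isElementwiseAffine hh (by omega) hv hw hv0 hva hwb ht
  have hNh : ((N : ℝ) - 1) * h + h ≤ N * h := by linarith
  refine eq_mul_and_abs_le ?_ (abs_quadrature_coeff_le hh hωnonneg hc hmoment)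
    ((Finset.abs_sum_le_sum_abs _ _).trans_eq (Finset.sum_congr rfl fun i _ => abs_mul _ _))
  rw [integral_integral_ball_eq_integral_incrementEnergy hv hw hv0 hh.le (by positivity)
      (zero_add h).le hNh, integral_symm_incrementEnergy hh.le hE,
    integral_quadrature_eq_sum_incrementEnergy hv hw hv0 (by positivity) (zero_add h).le hNh _ _
      c ω hc, sum_incrementEnergy_quadrature hc hE, hmoment]
  field_simp
  ring

/-- Consistency error of the symmetric inner quadrature rule for the constant kernel
`γ(x,y) = h⁻³·1_{|y−x|<h}` on a uniform one-dimensional grid applied to continuous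
piecewise-linear functions `v, w` vanishing on the first and last element.  The
quadrature nodes `±c k` with weights `ω k ≥ 0` satisfy the second-moment exactness
condition `2·∑ ωₖcₖ² = 2h³/3`.  Then
`D(v,w) − Dʰ(v,w) = ((1/(3h³))∑ ωₖcₖ³ − h/12)·∑(aᵢ₊₁−aᵢ)(bᵢ₊₁−bᵢ)`, and in
particular `|D(v,w) − Dʰ(v,w)| ≤ (7h/36)·∑|aᵢ₊₁−aᵢ||bᵢ₊₁−bᵢ|`. -/
theorem quadrature_consistency_error_1d
    (h : ℝ) (hh : 0 < h) (N : ℕ) (hN : 3 ≤ N)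
    (v w : ℝ → ℝ) (hv : Continuous v) (hw : Continuous w)
    (a b : ℕ → ℝ)
    (hv0 : ∀ x : ℝ, x ≤ h ∨ ((N : ℝ) - 1) * h ≤ x → v x = 0)
    (hw0 : ∀ x : ℝ, x ≤ h ∨ ((N : ℝ) - 1) * h ≤ x → w x = 0)
    (hva : ∀ i ∈ Finset.Icc 1 N, ∀ x ∈ Set.Icc (((i : ℝ) - 1) * h) ((i : ℝ) * h),
      v x = v (((i : ℝ) - 1) * h) + a i * (x - ((i : ℝ) - 1) * h))
    (hwb : ∀ i ∈ Finset.Icc 1 N, ∀ x ∈ Set.Icc (((i : ℝ) - 1) * h) ((i : ℝ) * h),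
      w x = w (((i : ℝ) - 1) * h) + b i * (x - ((i : ℝ) - 1) * h))
    (K : ℕ) (hK : 1 ≤ K)
    (c ω : ℕ → ℝ)
    (hcpos : 0 < c 1)
    (hcmono : ∀ k : ℕ, 1 ≤ k → k < K → c k < c (k + 1))
    (hclt : c K < h)
    (hωnonneg : ∀ k ∈ Finset.Icc 1 K, 0 ≤ ω k)
    (hexact : 2 * ∑ k ∈ Finset.Icc 1 K, ω k * (c k) ^ 2 = 2 * h ^ 3 / 3) :
    (∫ x in (0 : ℝ)..(N : ℝ) * h, ∫ y in (0 : ℝ)..(N : ℝ) * h,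
          (if |y - x| < h then h⁻¹ ^ 3 * ((v y - v x) * (w y - w x)) else 0)) -
        (∫ x in (0 : ℝ)..(N : ℝ) * h,
          h⁻¹ ^ 3 * ∑ k ∈ Finset.Icc 1 K,
            ((v (x + c k) - v x) * (w (x + c k) - w x) +
              (v (x - c k) - v x) * (w (x - c k) - w x)) * ω k) =
      ((1 / (3 * h ^ 3)) * ∑ k ∈ Finset.Icc 1 K, ω k * (c k) ^ 3 - h / 12) *
        ∑ i ∈ Finset.Icc 1 (N - 1), (a (i + 1) - a i) * (b (i + 1) - b i) ∧
    |(∫ x in (0 : ℝ)..(N : ℝ) * h, ∫ y in (0 : ℝ)..(N : ℝ) * h,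
          (if |y - x| < h then h⁻¹ ^ 3 * ((v y - v x) * (w y - w x)) else 0)) -
        (∫ x in (0 : ℝ)..(N : ℝ) * h,
          h⁻¹ ^ 3 * ∑ k ∈ Finset.Icc 1 K,
            ((v (x + c k) - v x) * (w (x + c k) - w x) +
              (v (x - c k) - v x) * (w (x - c k) - w x)) * ω k)| ≤
      (7 * h / 36) * ∑ i ∈ Finset.Icc 1 (N - 1), |a (i + 1) - a i| * |b (i + 1) - b i| :=
  quadrature_consistency_error_1d_general h hh N hN v w hv hw a b hv0 hva hwb K c ω hcpos hcmono
    hclt hωnonneg hexact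
end

section
/- Let h > 0 and N ∈ ℕ with N ≥ 2. Let u : ℝ → ℝ be differentiable on [0, Nh], and suppose there is g ∈ L²(0, Nh) such that u'(x₂) − u'(x₁) = ∫_{x₁}^{x₂} g(t) dt for all 0 ≤ x₁ ≤ x₂ ≤ Nh. For i = 1,…,N let x_i ∈ [(i−1)h, i·h]. Then ∑_{i=1}^{N−1} (u'(x_{i+1}) − u'(x_i))² ≤ 4h·∫₀^{Nh} g(t)² dt. -/
/-!
Write `u'(x_{i+1}) - u'(x_i) = ∫_{x_i}^{x_{i+1}} g`; Jensen's inequality for `t ↦ t²` over the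
average on `[x_i, x_{i+1}]` (i.e. Cauchy–Schwarz) bounds its square by
`(x_{i+1} - x_i) ∫_{x_i}^{x_{i+1}} g²`. Since `x_i ≤ ih ≤ x_{i+1}`, the points increase with gaps
at most `2h`, so the intervals `[x_i, x_{i+1}]` tile `[x_1, x_N] ⊆ [0, Nh]` and the sum is at most
`2h ∫₀^{Nh} g²`.
-/

open MeasureTheory

theorem sq_intervalIntegral_le {g : ℝ → ℝ} {a b : ℝ} (hab : a ≤ b)
    (hg : MemLp g 2 (volume.restrict (Set.Ioc a b))) :
    (∫ t in a..b, g t) ^ 2 ≤ (b - a) * ∫ t in a..b, g t ^ 2 := by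
  rcases hab.eq_or_lt with rfl | hlt
  · simp
  have hjensen := (Even.convexOn_pow (𝕜 := ℝ) even_two).map_set_average_le
    (continuous_pow 2).continuousOn isClosed_univ (by simp [hlt]) (by simp)
    (Filter.Eventually.of_forall fun _ => Set.mem_univ _)
    (hg.integrable one_le_two) hg.integrable_sq
  simp only [setAverage_eq, Real.volume_real_Ioc_of_le hlt.le, smul_eq_mul, mul_pow,
    ← intervalIntegral.integral_of_le hlt.le] at hjensen
  have hpos : 0 < b - a := sub_pos.2 hlt
  calc (∫ t in a..b, g t) ^ 2
      = (b - a) ^ 2 * ((b - a)⁻¹ ^ 2 * (∫ t in a..b, g t) ^ 2) := by field_simp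
    _ ≤ (b - a) ^ 2 * ((b - a)⁻¹ * ∫ t in a..b, g t ^ 2) := by gcongr
    _ = (b - a) * ∫ t in a..b, g t ^ 2 := by field_simp

theorem sum_sq_intervalIntegral_le {g : ℝ → ℝ} {a : ℕ → ℝ} {m n : ℕ} {δ : ℝ} (hmn : m ≤ n)
    (ha : MonotoneOn a (Set.Icc m n)) (hgap : ∀ k ∈ Finset.Ico m n, a (k + 1) - a k ≤ δ)
    (hg : MemLp g 2 (volume.restrict (Set.Ioc (a m) (a n)))) :
    ∑ k ∈ Finset.Ico m n, (∫ t in a k..a (k + 1), g t) ^ 2 ≤ δ * ∫ t in a m..a n, g t ^ 2 := by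
  have hsub : ∀ k ∈ Finset.Ico m n, Set.Ioc (a k) (a (k + 1)) ⊆ Set.Ioc (a m) (a n) := by
    intro k hk
    rw [Finset.mem_Ico] at hk
    exact Set.Ioc_subset_Ioc (ha ⟨le_rfl, hmn⟩ ⟨hk.1, hk.2.le⟩ hk.1)
      (ha ⟨by omega, hk.2⟩ ⟨hmn, le_rfl⟩ hk.2)
  have hstep : ∀ k ∈ Finset.Ico m n, a k ≤ a (k + 1) := by
    intro k hk
    rw [Finset.mem_Ico] at hk
    exact ha ⟨hk.1, hk.2.le⟩ ⟨by omega, hk.2⟩ (Nat.le_succ k)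
  have hsq : IntegrableOn (fun t => g t ^ 2) (Set.Ioc (a m) (a n)) := hg.integrable_sq
  rw [← intervalIntegral.sum_integral_adjacent_intervals_Ico hmn fun k hk =>
    (intervalIntegrable_iff_integrableOn_Ioc_of_le (hstep k (Finset.mem_Ico.2 hk))).2
      (hsq.mono_set (hsub k (Finset.mem_Ico.2 hk))), Finset.mul_sum]
  refine Finset.sum_le_sum fun k hk => ?_
  calc (∫ t in a k..a (k + 1), g t) ^ 2
      ≤ (a (k + 1) - a k) * ∫ t in a k..a (k + 1), g t ^ 2 :=
        sq_intervalIntegral_le (hstep k hk)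
          (hg.mono_measure (Measure.restrict_mono (hsub k hk) le_rfl))
    _ ≤ δ * ∫ t in a k..a (k + 1), g t ^ 2 := by
        gcongr
        · exact intervalIntegral.integral_nonneg (hstep k hk) fun t _ => sq_nonneg _
        · exact hgap k hk

def IsElementSample (h : ℝ) (N : ℕ) (x : ℕ → ℝ) : Prop :=
  ∀ i : ℕ, 1 ≤ i → i ≤ N → x i ∈ Set.Icc (((i : ℝ) - 1) * h) ((i : ℝ) * h)

namespace IsElementSample

variable {h : ℝ} {N : ℕ} {x : ℕ → ℝ}

theorem mem_Icc (hx : IsElementSample h N x) (hh : 0 ≤ h) {i : ℕ} (hi1 : 1 ≤ i) (hiN : i ≤ N) :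
    x i ∈ Set.Icc 0 (N * h) := by
  obtain ⟨hlo, hhi⟩ := hx i hi1 hiN
  have hi1' : (1 : ℝ) ≤ i := by exact_mod_cast hi1
  have hiN' : (i : ℝ) ≤ N := by exact_mod_cast hiN
  exact ⟨(mul_nonneg (by linarith) hh).trans hlo, hhi.trans (by gcongr)⟩

theorem monotoneOn (hx : IsElementSample h N x) (hh : 0 ≤ h) : MonotoneOn x (Set.Icc 1 N) := by
  rintro i ⟨hi1, hiN⟩ j ⟨hj1, hjN⟩ hij
  rcases hij.eq_or_lt with rfl | hlt
  · rfl
  have hij' : (i : ℝ) ≤ j - 1 := by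
    rw [le_sub_iff_add_le]
    exact_mod_cast hlt
  calc x i ≤ i * h := (hx i hi1 hiN).2
    _ ≤ (j - 1) * h := by gcongr
    _ ≤ x j := (hx j hj1 hjN).1

theorem sub_le (hx : IsElementSample h N x) {i : ℕ} (hi1 : 1 ≤ i) (hiN : i + 1 ≤ N) :
    x (i + 1) - x i ≤ 2 * h := by
  have hnext := (hx (i + 1) (by omega) hiN).2
  have hcur := (hx i hi1 (by omega)).1
  push_cast at hnext
  linarith

end IsElementSample

theorem slope_difference_bound_general
    (h : ℝ) (hh : 0 < h) (N : ℕ) (hN : 2 ≤ N)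
    (u' : ℝ → ℝ)
    (g : ℝ → ℝ)
    (hg : MeasureTheory.MemLp g 2 (MeasureTheory.volume.restrict (Set.Ioc (0 : ℝ) ((N : ℝ) * h))))
    (hftc : ∀ x₁ x₂ : ℝ, 0 ≤ x₁ → x₁ ≤ x₂ → x₂ ≤ (N : ℝ) * h →
      u' x₂ - u' x₁ = ∫ t in x₁..x₂, g t)
    (x : ℕ → ℝ)
    (hx : ∀ i : ℕ, 1 ≤ i → i ≤ N → x i ∈ Set.Icc (((i : ℝ) - 1) * h) ((i : ℝ) * h)) :
    ∑ i ∈ Finset.Icc 1 (N - 1), (u' (x (i + 1)) - u' (x i)) ^ 2 ≤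
      4 * h * ∫ t in (0 : ℝ)..(N : ℝ) * h, (g t) ^ 2 := by
  have hsample : IsElementSample h N x := hx
  have hN1 : 1 ≤ N := by omega
  have hmono := hsample.monotoneOn hh.le
  obtain ⟨hx0, -⟩ := hsample.mem_Icc hh.le le_rfl hN1
  obtain ⟨-, hxN⟩ := hsample.mem_Icc hh.le hN1 le_rfl
  have hIcc : Finset.Icc 1 (N - 1) = Finset.Ico 1 N := by
    rw [← Finset.Ico_add_one_right_eq_Icc, Nat.sub_add_cancel hN1]
  have hsq : IntervalIntegrable (fun t => g t ^ 2) volume 0 (N * h) :=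
    (intervalIntegrable_iff_integrableOn_Ioc_of_le (by positivity)).2 hg.integrable_sq
  calc ∑ i ∈ Finset.Icc 1 (N - 1), (u' (x (i + 1)) - u' (x i)) ^ 2
      = ∑ i ∈ Finset.Ico 1 N, (∫ t in x i..x (i + 1), g t) ^ 2 := by
        rw [hIcc]
        refine Finset.sum_congr rfl fun i hi => ?_
        obtain ⟨hi1, hiN⟩ := Finset.mem_Ico.1 hi
        rw [hftc _ _ (hsample.mem_Icc hh.le hi1 hiN.le).1
          (hmono ⟨hi1, hiN.le⟩ ⟨by omega, hiN⟩ (Nat.le_succ i))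
          (hsample.mem_Icc hh.le (by omega) hiN).2]
    _ ≤ 2 * h * ∫ t in x 1..x N, g t ^ 2 :=
        sum_sq_intervalIntegral_le hN1 hmono
          (fun i hi => hsample.sub_le (Finset.mem_Ico.1 hi).1 (Finset.mem_Ico.1 hi).2)
          (hg.mono_measure (Measure.restrict_mono (Set.Ioc_subset_Ioc hx0 hxN) le_rfl))
    _ ≤ 2 * h * ∫ t in (0 : ℝ)..N * h, g t ^ 2 := by
        gcongr
        exact intervalIntegral.integral_mono_interval hx0
          (hmono ⟨le_rfl, hN1⟩ ⟨hN1, le_rfl⟩ hN1) hxN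
          (Filter.Eventually.of_forall fun t => sq_nonneg (g t)) hsq
    _ ≤ 4 * h * ∫ t in (0 : ℝ)..N * h, g t ^ 2 := by
        refine mul_le_mul_of_nonneg_right (by linarith) ?_
        exact intervalIntegral.integral_nonneg (by positivity) fun t _ => sq_nonneg (g t)

/-- Control of the squared differences of slopes of the piecewise-linear interpolant
of an `H²` function: if `u` is differentiable on `[0, Nh]` with derivative `u'`
whose increments are given by integrating `g ∈ L²(0, Nh)`, and `xᵢ ∈ [(i−1)h, ih]`,
then `∑_{i=1}^{N−1} (u'(x_{i+1}) − u'(x_i))² ≤ 4h·∫₀^{Nh} g²`. -/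
theorem slope_difference_bound
    (h : ℝ) (hh : 0 < h) (N : ℕ) (hN : 2 ≤ N)
    (u u' : ℝ → ℝ)
    (hdiff : ∀ x ∈ Set.Icc (0 : ℝ) ((N : ℝ) * h),
      HasDerivWithinAt u (u' x) (Set.Icc (0 : ℝ) ((N : ℝ) * h)) x)
    (g : ℝ → ℝ)
    (hg : MeasureTheory.MemLp g 2 (MeasureTheory.volume.restrict (Set.Ioc (0 : ℝ) ((N : ℝ) * h))))
    (hftc : ∀ x₁ x₂ : ℝ, 0 ≤ x₁ → x₁ ≤ x₂ → x₂ ≤ (N : ℝ) * h →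
      u' x₂ - u' x₁ = ∫ t in x₁..x₂, g t)
    (x : ℕ → ℝ)
    (hx : ∀ i : ℕ, 1 ≤ i → i ≤ N → x i ∈ Set.Icc (((i : ℝ) - 1) * h) ((i : ℝ) * h)) :
    ∑ i ∈ Finset.Icc 1 (N - 1), (u' (x (i + 1)) - u' (x i)) ^ 2 ≤
      4 * h * ∫ t in (0 : ℝ)..(N : ℝ) * h, (g t) ^ 2 :=
  slope_difference_bound_general h hh N hN u' g hg hftc x hx
end

section
/- Let ζ > 0, δ > 0, and N ∈ ℕ with N ≥ 1, and set h̄ := δ/N. For k ∈ ℤ with 1 ≤ |k| ≤ N define the quadrature points x_k := sign(k)·(2|k| − 1)·h̄/2, the constraint coefficients β_k := (ζ/δ³)·x_k², and the weights ω_k := 20·δ·N·(2|k| − 1)² / (48N⁴ − 40N² + 7). Then: (i) 48N⁴ − 40N² + 7 > 0; (ii) ∑_{1 ≤ |k| ≤ N} ω_k·β_k = 2ζ/3 = ∫_{−δ}^{δ} (ζ/δ³)·t² dt, i.e. the quadrature rule with points x_k and weights ω_k integrates the function t ↦ (ζ/δ³)·t² exactly over [−δ, δ]; (iii) ω_k >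 0 for all k; (iv) ω_k ≥ δ/(3N³) for all k, so the minimum weight is bounded below by a positive constant (depending only on N) times δ; (v) for every family (ω'_k)_{1 ≤ |k| ≤ N} of real numbers with ∑_{1 ≤ |k| ≤ N} ω'_k·β_k = 2ζ/3, one has ∑_{1 ≤ |k| ≤ N} ω_k² ≤ ∑_{1 ≤ |k| ≤ N} (ω'_k)². -/
open MeasureTheory Finset

lemma sum_odd_pow4 (n : ℕ) :
    ∑ j ∈ Finset.range n, (2*(j:ℝ)+1)^4
      = (n:ℝ)*(48*(n:ℝ)^4-40*(n:ℝ)^2+7)/15 := by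
  induction n with
  | zero => simp
  | succ n ih => rw [Finset.sum_range_succ, ih]; push_cast; ring

lemma sum_sym (n : ℕ) (h : ℤ → ℝ) :
    ∑ k ∈ (Finset.Icc (-(n : ℤ)) (n : ℤ)).filter (fun k => k ≠ 0), h k
      = ∑ j ∈ Finset.range n, (h ((j:ℤ)+1) + h (-((j:ℤ)+1))) := by
  induction n with
  | zero =>
      have he : (Finset.Icc (-((0:ℕ):ℤ)) ((0:ℕ):ℤ)).filter (fun k => k ≠ 0) = ∅ := by
        ext k
        simp only [Finset.mem_filter, Finset.mem_Icc, Finset.notMem_empty, iff_false]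
        omega
      simp only [Nat.cast_zero, neg_zero] at he ⊢
      rw [he]
      simp
  | succ n ih =>
      have hset : (Finset.Icc (-((n:ℤ)+1)) ((n:ℤ)+1)).filter (fun k => k ≠ 0)
          = insert ((n:ℤ)+1) (insert (-((n:ℤ)+1))
              ((Finset.Icc (-(n : ℤ)) (n : ℤ)).filter (fun k => k ≠ 0))) := by
        ext k
        simp only [Finset.mem_filter, Finset.mem_Icc, Finset.mem_insert]
        omega
      push_cast
      rw [hset, Finset.sum_insert, Finset.sum_insert, ih, Finset.sum_range_succ]
      · ring
      · simp only [Finset.mem_filter, Finset.mem_Icc]; omega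
      · simp only [Finset.mem_insert, Finset.mem_filter, Finset.mem_Icc]; omega

/-- Explicit one-dimensional optimization-based (GMLS) inner quadrature weights for
the constant kernel `γ(x,y) = ζ/δ³` on `|y−x| ≤ δ`: quadrature points
`x_k = sign(k)·(2|k|−1)·h̄/2` with `h̄ = δ/N`, constraint coefficients
`β_k = (ζ/δ³)·x_k²`, and weights `ω_k = 20δN(2|k|−1)²/(48N⁴−40N²+7)`.  The rule is
exact on `t ↦ (ζ/δ³)t²`, the weights are positive and bounded below by `δ/(3N³)`,
and they minimize the Euclidean norm among all weights satisfying the constraint. -/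
theorem gmls_weights_1d
    (ζ δ : ℝ) (hζ : 0 < ζ) (hδ : 0 < δ)
    (N : ℕ) (hN : 1 ≤ N)
    (hbar : ℝ) (hhbar : hbar = δ / N)
    (x β ω : ℤ → ℝ)
    (hx : ∀ k : ℤ, x k = (Int.sign k : ℝ) * (2 * (|k| : ℝ) - 1) * hbar / 2)
    (hβ : ∀ k : ℤ, β k = (ζ / δ ^ 3) * (x k) ^ 2)
    (hω : ∀ k : ℤ, ω k = 20 * δ * (N : ℝ) * (2 * (|k| : ℝ) - 1) ^ 2 /
      (48 * (N : ℝ) ^ 4 - 40 * (N : ℝ) ^ 2 + 7)) :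
    (0 < 48 * (N : ℝ) ^ 4 - 40 * (N : ℝ) ^ 2 + 7) ∧
    (∑ k ∈ (Finset.Icc (-(N : ℤ)) (N : ℤ)).filter (fun k => k ≠ 0), ω k * β k
      = 2 * ζ / 3 ∧
      (2 * ζ / 3 : ℝ) = ∫ t in (-δ)..δ, (ζ / δ ^ 3) * t ^ 2) ∧
    (∀ k ∈ (Finset.Icc (-(N : ℤ)) (N : ℤ)).filter (fun k => k ≠ 0), 0 < ω k) ∧
    (∀ k ∈ (Finset.Icc (-(N : ℤ)) (N : ℤ)).filter (fun k => k ≠ 0),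
      δ / (3 * (N : ℝ) ^ 3) ≤ ω k) ∧
    (∀ ω' : ℤ → ℝ,
      (∑ k ∈ (Finset.Icc (-(N : ℤ)) (N : ℤ)).filter (fun k => k ≠ 0), ω' k * β k
        = 2 * ζ / 3) →
      ∑ k ∈ (Finset.Icc (-(N : ℤ)) (N : ℤ)).filter (fun k => k ≠ 0), (ω k) ^ 2 ≤
        ∑ k ∈ (Finset.Icc (-(N : ℤ)) (N : ℤ)).filter (fun k => k ≠ 0), (ω' k) ^ 2) := by
  have hN' : (1:ℝ) ≤ (N:ℝ) := by exact_mod_cast hN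
  have hNpos : (0:ℝ) < (N:ℝ) := by linarith
  have hD : (0:ℝ) < 48 * (N : ℝ) ^ 4 - 40 * (N : ℝ) ^ 2 + 7 := by
    nlinarith [sq_nonneg ((N:ℝ)^2 - 1), hN']
  set D : ℝ := 48 * (N : ℝ) ^ 4 - 40 * (N : ℝ) ^ 2 + 7 with hDdef
  have hδ' : δ ≠ 0 := ne_of_gt hδ
  have hN0 : (N:ℝ) ≠ 0 := ne_of_gt hNpos
  have hD0 : D ≠ 0 := ne_of_gt hD
  -- the exactness sum
  have hterm : ∀ j : ℕ, ω ((j:ℤ)+1) * β ((j:ℤ)+1) + ω (-((j:ℤ)+1)) * β (-((j:ℤ)+1))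
      = (10*ζ/((N:ℝ)*D)) * (2*(j:ℝ)+1)^4 := by
    intro j
    have habs1 : |((((j:ℤ)+1) : ℤ) : ℝ)| = (j:ℝ)+1 := by
      push_cast; exact abs_of_nonneg (by positivity)
    have habs2 : |(((-((j:ℤ)+1)) : ℤ) : ℝ)| = (j:ℝ)+1 := by
      push_cast; rw [abs_neg]; exact abs_of_nonneg (by positivity)
    have hsgn1 : ((Int.sign ((j:ℤ)+1)) : ℝ) = 1 := by
      rw [Int.sign_eq_one_iff_pos.mpr (by positivity)]; norm_num
    have hsgn2 : ((Int.sign (-((j:ℤ)+1))) : ℝ) = -1 := by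
      rw [Int.sign_eq_neg_one_iff_neg.mpr (by omega)]; norm_num
    rw [hω, hβ, hx, hω, hβ, hx, hhbar, habs1, habs2, hsgn1, hsgn2]
    rw [hDdef]
    field_simp
    ring
  have hsum : ∑ k ∈ (Finset.Icc (-(N : ℤ)) (N : ℤ)).filter (fun k => k ≠ 0),
      ω k * β k = 2 * ζ / 3 := by
    rw [sum_sym N (fun k => ω k * β k)]
    calc ∑ j ∈ Finset.range N, (ω ((j:ℤ)+1) * β ((j:ℤ)+1)
            + ω (-((j:ℤ)+1)) * β (-((j:ℤ)+1)))
        = ∑ j ∈ Finset.range N, (10*ζ/((N:ℝ)*D)) * (2*(j:ℝ)+1)^4 :=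
          Finset.sum_congr rfl (fun j _ => hterm j)
      _ = (10*ζ/((N:ℝ)*D)) * ((N:ℝ)*D/15) := by
          rw [← Finset.mul_sum, sum_odd_pow4, hDdef]
      _ = 2 * ζ / 3 := by field_simp; ring
  refine ⟨hD, ⟨hsum, ?_⟩, ?_, ?_, ?_⟩
  · rw [intervalIntegral.integral_const_mul, integral_pow]
    field_simp
    ring
  · intro k hk
    simp only [Finset.mem_filter, Finset.mem_Icc] at hk
    have h1 : (1:ℤ) ≤ |k| := by
      rcases hk.2.lt_or_gt with h|h
      · rw [abs_of_neg h]; omega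
      · rw [abs_of_pos h]; omega
    have ha : (1:ℝ) ≤ |(k:ℝ)| := by exact_mod_cast h1
    rw [hω]
    apply div_pos _ hD
    have hb : (1:ℝ) ≤ (2*|(k:ℝ)|-1)^2 := by nlinarith
    nlinarith [mul_pos hδ hNpos, hb]
  · intro k hk
    simp only [Finset.mem_filter, Finset.mem_Icc] at hk
    have h1 : (1:ℤ) ≤ |k| := by
      rcases hk.2.lt_or_gt with h|h
      · rw [abs_of_neg h]; omega
      · rw [abs_of_pos h]; omega
    have ha : (1:ℝ) ≤ |(k:ℝ)| := by exact_mod_cast h1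
    rw [hω]
    rw [div_le_div_iff₀ (by positivity) hD, hDdef]
    nlinarith [mul_le_mul_of_nonneg_left
      (show (1:ℝ) ≤ (2*|(k:ℝ)|-1)^2 by nlinarith)
      (le_of_lt (show (0:ℝ) < 60*δ*(N:ℝ)^4 by positivity)),
      mul_pos hδ (show (0:ℝ) < 12*(N:ℝ)^4+40*(N:ℝ)^2-7 by nlinarith [sq_nonneg ((N:ℝ)^2-1)])]
  · intro ω' hω'
    set S := (Finset.Icc (-(N : ℤ)) (N : ℤ)).filter (fun k => k ≠ 0) with hS
    set lam : ℝ := 80*δ^2*(N:ℝ)^3/(ζ*D) with hlam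
    have hprop : ∀ k ∈ S, ω k = lam * β k := by
      intro k hk
      simp only [hS, Finset.mem_filter, Finset.mem_Icc] at hk
      have hk0 : k ≠ 0 := hk.2
      have hs : Int.sign k = 1 ∨ Int.sign k = -1 := by
        rcases lt_trichotomy k 0 with h|h|h
        · right; exact Int.sign_eq_neg_one_iff_neg.mpr h
        · exact absurd h hk0
        · left; exact Int.sign_eq_one_iff_pos.mpr h
      rw [hω, hβ, hx, hhbar, hlam, hDdef]
      rcases hs with h|h <;> rw [h] <;> push_cast <;> field_simp <;> ring
    have hA : ∑ k ∈ S, ω' k * ω k = lam * (2 * ζ / 3) := by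
      calc ∑ k ∈ S, ω' k * ω k = ∑ k ∈ S, ω' k * (lam * β k) :=
            Finset.sum_congr rfl (fun k hk => by rw [hprop k hk])
        _ = lam * ∑ k ∈ S, ω' k * β k := by
            rw [Finset.mul_sum]; exact Finset.sum_congr rfl (fun k _ => by ring)
        _ = lam * (2 * ζ / 3) := by rw [hω']
    have hB : ∑ k ∈ S, (ω k)^2 = lam * (2 * ζ / 3) := by
      calc ∑ k ∈ S, (ω k)^2 = ∑ k ∈ S, ω k * (lam * β k) :=
            Finset.sum_congr rfl (fun k hk => by rw [← hprop k hk]; ring)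
        _ = lam * ∑ k ∈ S, ω k * β k := by
            rw [Finset.mul_sum]; exact Finset.sum_congr rfl (fun k _ => by ring)
        _ = lam * (2 * ζ / 3) := by rw [hsum]
    have hexp : ∑ k ∈ S, (ω' k - ω k)^2
        = ∑ k ∈ S, (ω' k)^2 - 2 * ∑ k ∈ S, ω' k * ω k + ∑ k ∈ S, (ω k)^2 := by
      rw [Finset.mul_sum, ← Finset.sum_sub_distrib, ← Finset.sum_add_distrib]
      exact Finset.sum_congr rfl (fun k _ => by ring)
    have hnn : 0 ≤ ∑ k ∈ S, (ω' k - ω k)^2 :=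
      Finset.sum_nonneg (fun k _ => sq_nonneg _)
    linarith
end

section
/- Let u : ℝ → ℝ be twice continuously differentiable and let x ∈ ℝ. Then (3/δ³)·∫_{x−δ}^{x+δ} (u(y) − u(x)) dy tends to u''(x) as δ → 0⁺. Equivalently, the nonlocal Laplacian L_δ u(x) = 2·∫_ℝ γ_{1,c}(x,y)·(u(y) − u(x)) dy with constant one-dimensional kernel γ_{1,c}(x,y) = 3/(2δ³) for |y − x| ≤ δ and 0 otherwise converges to the local Laplacian u''(x) in the limit of vanishing horizon. -/
/-!
Subtract the second-order Taylor polynomial of `u` at `x`: over the symmetric interval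
`[x - δ, x + δ]` its linear term integrates to `0` and its quadratic term to `u''(x) δ³ / 3`,
while the remainder is `o((y - x)²)`, so its integral is `o(δ³)`. The kernel form is the same
integral, the kernel being `3 / (2δ³)` times the indicator of `[x - δ, x + δ]`.
-/

open MeasureTheory Filter Asymptotics Topology
open scoped Interval

theorem integral_linear_add_quadratic_symm (a b x δ : ℝ) :
    ∫ y in x - δ..x + δ, (a * (y - x) + b * (y - x) ^ 2) = 2 * b * δ ^ 3 / 3 := by
  rw [intervalIntegral.integral_comp_sub_right (fun y => a * y + b * y ^ 2), add_sub_cancel_left,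
    sub_sub_cancel_left, intervalIntegral.integral_add
      (Continuous.intervalIntegrable (by fun_prop) _ _)
      (Continuous.intervalIntegrable (by fun_prop) _ _),
    intervalIntegral.integral_const_mul, intervalIntegral.integral_const_mul, integral_id,
    integral_pow]
  ring

theorem abs_sub_le_abs_of_mem_uIcc_sub_add {x y δ : ℝ} (hy : y ∈ [[x - δ, x + δ]]) :
    |y - x| ≤ |δ| := by
  rw [abs_le]
  rcases Set.mem_uIcc.mp hy with ⟨h₁, h₂⟩ | ⟨h₁, h₂⟩ <;>
    rcases abs_cases δ with ⟨hδ, hδ₀⟩ | ⟨hδ, hδ₀⟩ <;> constructor <;> linarith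

theorem isLittleO_integral_symm_of_isLittleO_pow {E : Type*} [NormedAddCommGroup E]
    [NormedSpace ℝ E] {f : ℝ → E} {x : ℝ} {n : ℕ} (hf : f =o[𝓝 x] fun y => (y - x) ^ n) :
    (fun δ => ∫ y in x - δ..x + δ, f y) =o[𝓝 0] fun δ => δ ^ (n + 1) := by
  refine IsLittleO.of_bound fun c hc => ?_
  obtain ⟨r, hr, hball⟩ := Metric.eventually_nhds_iff_ball.mp (hf.def (half_pos hc))
  filter_upwards [Metric.ball_mem_nhds 0 hr] with δ hδ
  calc ‖∫ y in x - δ..x + δ, f y‖ ≤ c / 2 * |δ| ^ n * |x + δ - (x - δ)| := by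
        refine intervalIntegral.norm_integral_le_of_norm_le_const fun y hy => ?_
        have hyx := abs_sub_le_abs_of_mem_uIcc_sub_add (Set.uIoc_subset_uIcc hy)
        have hyr : y ∈ Metric.ball x r := by
          rw [Metric.mem_ball, Real.dist_eq]
          exact hyx.trans_lt (by simpa using hδ)
        calc ‖f y‖ ≤ c / 2 * ‖(y - x) ^ n‖ := hball y hyr
          _ ≤ c / 2 * |δ| ^ n := by
            rw [norm_pow, Real.norm_eq_abs]
            gcongr
    _ = c * ‖δ ^ (n + 1)‖ := by
        rw [show x + δ - (x - δ) = 2 * δ by ring, norm_pow, Real.norm_eq_abs, abs_mul,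
          abs_two, pow_succ]
        ring

theorem isLittleO_sub_taylor_two {u : ℝ → ℝ} (hu : ContDiff ℝ 2 u) (x : ℝ) :
    (fun y => u y - (u x + deriv u x * (y - x) + deriv (deriv u) x / 2 * (y - x) ^ 2))
      =o[𝓝 x] fun y => (y - x) ^ 2 := by
  have htaylor : ∀ y, taylorWithinEval u 2 Set.univ x y
      = u x + deriv u x * (y - x) + deriv (deriv u) x / 2 * (y - x) ^ 2 := by
    intro y
    simp [taylor_within_apply, iteratedDerivWithin_univ, iteratedDeriv_succ]
    ring
  simpa only [htaylor] using taylor_isLittleO_univ hu (x₀ := x)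

theorem integral_ite_abs_sub_le_mul (f : ℝ → ℝ) {x δ : ℝ} (c : ℝ) (hδ : 0 ≤ δ) :
    ∫ y, (if |y - x| ≤ δ then c else 0) * f y = c * ∫ y in x - δ..x + δ, f y := by
  have hind : (fun y => (if |y - x| ≤ δ then c else 0) * f y)
      = (Metric.closedBall x δ).indicator fun y => c * f y := by
    ext y
    simp only [Set.indicator, Metric.mem_closedBall, Real.dist_eq, ite_mul, zero_mul]
  rw [hind, integral_indicator Metric.isClosed_closedBall.measurableSet, Real.closedBall_eq_Icc,
    integral_Icc_eq_integral_Ioc, ← intervalIntegral.integral_of_le (by linarith),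
    intervalIntegral.integral_const_mul]

theorem tendsto_three_div_cube_mul_integral_sub {u : ℝ → ℝ} (hu : ContDiff ℝ 2 u) (x : ℝ) :
    Tendsto (fun δ => 3 / δ ^ 3 * ∫ y in x - δ..x + δ, (u y - u x)) (𝓝[≠] 0)
      (𝓝 (deriv (deriv u) x)) := by
  set m := deriv (deriv u) x
  set T : ℝ → ℝ := fun y => u x + deriv u x * (y - x) + m / 2 * (y - x) ^ 2
  have hT_cont : Continuous T := by fun_prop
  have hremainder : Tendsto (fun δ => (∫ y in x - δ..x + δ, (u y - T y)) / δ ^ 3) (𝓝[≠] 0)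
      (𝓝 0) :=
    (isLittleO_integral_symm_of_isLittleO_pow
      (isLittleO_sub_taylor_two hu x)).tendsto_div_nhds_zero.mono_left nhdsWithin_le_nhds
  have hsplit : ∀ δ ≠ 0, 3 / δ ^ 3 * ∫ y in x - δ..x + δ, (u y - u x)
      = m + 3 * ((∫ y in x - δ..x + δ, (u y - T y)) / δ ^ 3) := by
    intro δ hδ
    have hT_int : ∫ y in x - δ..x + δ, (T y - u x) = m * δ ^ 3 / 3 := by
      rw [show (fun y => T y - u x) = fun y => deriv u x * (y - x) + m / 2 * (y - x) ^ 2 by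
        ext; ring, integral_linear_add_quadratic_symm]
      ring
    rw [show (fun y => u y - u x) = fun y => (u y - T y) + (T y - u x) by ext; ring,
      intervalIntegral.integral_add (f := fun y => u y - T y) (g := fun y => T y - u x)
        ((hu.continuous.sub hT_cont).intervalIntegrable _ _)
        ((hT_cont.sub continuous_const).intervalIntegrable _ _), hT_int]
    field_simp
    ring
  have hlim := (tendsto_const_nhds (x := m)).add (hremainder.const_mul 3)
  rw [mul_zero, add_zero] at hlim
  exact hlim.congr' (eventually_nhdsWithin_of_forall fun δ hδ => (hsplit δ hδ).symm)

/-- The one-dimensional nonlocal Laplacian with constant kernel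
`γ₁c(x,y) = 3/(2δ³)` for `|y−x| ≤ δ` (and `0` otherwise) converges, as the horizon
`δ → 0⁺`, to the local Laplacian `u''(x)` for every `C²` function `u`. -/
theorem nonlocal_laplacian_constant_kernel_1d_limit
    (u : ℝ → ℝ) (hu : ContDiff ℝ 2 u) (x : ℝ) :
    Tendsto (fun δ : ℝ => (3 / δ ^ 3) * ∫ y in (x - δ)..(x + δ), (u y - u x))
      (nhdsWithin 0 (Set.Ioi 0)) (nhds (deriv (deriv u) x)) ∧
    Tendsto (fun δ : ℝ =>
        2 * ∫ y : ℝ, (if |y - x| ≤ δ then 3 / (2 * δ ^ 3) else 0) * (u y - u x))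
      (nhdsWithin 0 (Set.Ioi 0)) (nhds (deriv (deriv u) x)) := by
  have hlim := (tendsto_three_div_cube_mul_integral_sub hu x).mono_left
    (nhdsWithin_mono 0 fun δ (hδ : 0 < δ) => hδ.ne')
  refine ⟨hlim, hlim.congr' (eventually_nhdsWithin_of_forall fun δ (hδ : 0 < δ) => ?_)⟩
  beta_reduce
  rw [integral_ite_abs_sub_le_mul _ _ hδ.le]
  ring
end

section
/- Let u : ℝ → ℝ be twice continuously differentiable and let x ∈ ℝ. Then (2/δ²)·∫_{x−δ}^{x+δ} (u(y) − u(x))/|y − x| dy tends to u''(x) as δ → 0⁺. Equivalently, the nonlocal Laplacian L_δ u(x) = 2·∫_ℝ γ_{1,r}(x,y)·(u(y) − u(x)) dy with rational one-dimensional kernel γ_{1,r}(x,y) = 1/(δ²·|y − x|) for |y − x| ≤ δ and 0 otherwise converges to the local Laplacian u''(x) in the limit of vanishing horizon. -/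
open MeasureTheory Filter Asymptotics Topology Set

/-!
Folding the interval at `x` turns the integral into `∫₀^δ φ(s)/s ds` with
`φ(s) = u(x+s) + u(x-s) - 2u(x)`. By Taylor's theorem `φ(s) = u''(x)s² + o(s²)`, so the integrand
is `u''(x)s + o(s)` and the integral is `u''(x)δ²/2 + o(δ²)`. The kernel form is the same integral,
since the kernel vanishes outside `[x - δ, x + δ]`.
-/

theorem intervalIntegral.isLittleO_integral_of_isLittleO_pow {E : Type*} [NormedAddCommGroup E]
    [NormedSpace ℝ E] {g : ℝ → E} {n : ℕ} (hg : g =o[𝓝[>] 0] (· ^ n)) :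
    (fun δ => ∫ s in (0 : ℝ)..δ, g s) =o[𝓝[>] 0] (· ^ (n + 1)) := by
  refine IsLittleO.of_bound fun ε hε => ?_
  obtain ⟨η, hη, hsub⟩ := mem_nhdsGT_iff_exists_Ioo_subset.mp (hg.bound hε)
  filter_upwards [Ioo_mem_nhdsGT hη] with δ ⟨hδ, hδη⟩
  have hpow_int : ∫ s in (0 : ℝ)..δ, ε * s ^ n = ε * δ ^ (n + 1) / (n + 1) := by
    rw [intervalIntegral.integral_const_mul, integral_pow]; ring
  calc ‖∫ s in (0 : ℝ)..δ, g s‖ ≤ ∫ s in (0 : ℝ)..δ, ε * s ^ n := by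
        refine intervalIntegral.norm_integral_le_of_norm_le hδ.le
          (Eventually.of_forall fun s ⟨hs, hsδ⟩ => ?_)
          (Continuous.intervalIntegrable (by fun_prop) _ _)
        simpa [abs_of_pos hs] using hsub ⟨hs, hsδ.trans_lt hδη⟩
    _ ≤ ε * ‖δ ^ (n + 1)‖ := by
        rw [hpow_int, Real.norm_eq_abs, abs_of_pos (by positivity)]
        exact div_le_self (by positivity) (by linarith [n.cast_nonneg (α := ℝ)])

theorem tendsto_two_div_sq_mul_integral_of_isLittleO {h : ℝ → ℝ} {L : ℝ}
    (hint : ∀ δ, IntervalIntegrable h volume 0 δ)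
    (hh : (fun s => h s - L * s) =o[𝓝[>] 0] fun s => s) :
    Tendsto (fun δ => (2 / δ ^ 2) * ∫ s in (0 : ℝ)..δ, h s) (𝓝[>] 0) (𝓝 L) := by
  have hrem := (intervalIntegral.isLittleO_integral_of_isLittleO_pow (n := 1)
    (by simp_rw [pow_one]; exact hh)).tendsto_div_nhds_zero
  have hlim := (hrem.const_mul 2).add_const L
  rw [mul_zero, zero_add] at hlim
  refine hlim.congr' ?_
  filter_upwards [self_mem_nhdsWithin] with δ (hδ : 0 < δ)
  rw [intervalIntegral.integral_sub (hint δ)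
    (Continuous.intervalIntegrable (by fun_prop) _ _), intervalIntegral.integral_const_mul,
    integral_id]
  field_simp
  ring

theorem taylorWithinEval_two_univ (f : ℝ → ℝ) (x₀ x : ℝ) :
    taylorWithinEval f 2 univ x₀ x =
      f x₀ + deriv f x₀ * (x - x₀) + deriv (deriv f) x₀ / 2 * (x - x₀) ^ 2 := by
  simp [taylorWithinEval_succ, taylor_within_zero_eval, iteratedDerivWithin_univ,
    iteratedDeriv_succ]
  ring

theorem ContDiff.isLittleO_symmSecondDiff {f : ℝ → ℝ} (hf : ContDiff ℝ 2 f) (x : ℝ) :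
    (fun s => f (x + s) + f (x - s) - 2 * f x - deriv (deriv f) x * s ^ 2) =o[𝓝 0]
      (· ^ 2) := by
  have hT := taylor_isLittleO_univ (x₀ := x) hf
  have hplus := hT.comp_tendsto (k := fun s => x + s) (by
    simpa using (continuous_const_add x).tendsto 0)
  have hminus := hT.comp_tendsto (k := fun s => x - s) (by
    simpa using (continuous_sub_left x).tendsto 0)
  refine ((hplus.congr_right fun s => ?_).add (hminus.congr_right fun s => ?_)).congr_left
    fun s => ?_ <;> simp only [Function.comp_apply, taylorWithinEval_two_univ] <;> ring

theorem ContDiff.isLittleO_symm_sub_div_abs {u : ℝ → ℝ} (hu : ContDiff ℝ 2 u) (x : ℝ) :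
    (fun s => (u (x + s) - u x) / |s| + (u (x - s) - u x) / |s| - deriv (deriv u) x * s)
      =o[𝓝[>] 0] fun s => s := by
  have h := ((hu.isLittleO_symmSecondDiff x).mono (nhdsWithin_le_nhds (s := Ioi 0))).mul_isBigO
    (isBigO_refl (fun s : ℝ => s⁻¹) _)
  refine h.congr' ?_ ?_ <;> filter_upwards [self_mem_nhdsWithin] with s (hs : 0 < s)
  · rw [abs_of_pos hs]; field_simp; ring
  · field_simp

theorem intervalIntegrable_sub_div_abs_sub {f : ℝ → ℝ} {a : ℝ} (hf : Continuous f)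
    (hfa : DifferentiableAt ℝ f a) (b c : ℝ) :
    IntervalIntegrable (fun y => (f y - f a) / |y - a|) volume b c := by
  have hslope : Continuous (dslope f a) :=
    continuousOn_univ.mp ((continuousOn_dslope univ_mem).mpr ⟨hf.continuousOn, hfa⟩)
  refine (hslope.norm.intervalIntegrable b c).mono_fun'
    ((hf.measurable.sub_const _).div (measurable_id.sub_const a).abs).aestronglyMeasurable
    (ae_of_all _ fun y => ?_)
  rcases eq_or_ne y a with rfl | hy
  · simp
  · simp [dslope_of_ne f hy, slope_def_field]

theorem intervalIntegral.integral_centered_eq {E : Type*} [NormedAddCommGroup E]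
    [NormedSpace ℝ E] {f : ℝ → E} {a δ : ℝ} (hf : IntervalIntegrable f volume (a - δ) (a + δ)) :
    ∫ y in (a - δ)..(a + δ), f y = ∫ s in (0 : ℝ)..δ, (f (a + s) + f (a - s)) := by
  have hmid : a ∈ uIcc (a - δ) (a + δ) := by
    rcases le_total 0 δ with h | h <;> simp [uIcc, h]
  have hleft := hf.mono_set (uIcc_subset_uIcc left_mem_uIcc hmid)
  have hright := hf.mono_set (uIcc_subset_uIcc hmid right_mem_uIcc)
  rw [intervalIntegral.integral_add (by simpa using hright.comp_add_left a)
      (by simpa using hleft.symm.comp_sub_left a),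
    intervalIntegral.integral_comp_add_left, intervalIntegral.integral_comp_sub_left,
    ← intervalIntegral.integral_add_adjacent_intervals hleft hright]
  simp [add_comm]

theorem integral_ite_abs_sub_le_smul {E : Type*} [NormedAddCommGroup E] [NormedSpace ℝ E]
    (k : ℝ → ℝ) (g : ℝ → E) {x δ : ℝ} (hδ : 0 ≤ δ) :
    ∫ y, (if |y - x| ≤ δ then k y else 0) • g y = ∫ y in (x - δ)..(x + δ), k y • g y := by
  have hind : (fun y => (if |y - x| ≤ δ then k y else 0) • g y)
      = (Icc (x - δ) (x + δ)).indicator fun y => k y • g y := by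
    ext y
    simp only [indicator, ← Real.closedBall_eq_Icc, Metric.mem_closedBall, Real.dist_eq]
    split_ifs <;> simp
  rw [hind, integral_indicator measurableSet_Icc, integral_Icc_eq_integral_Ioc,
    intervalIntegral.integral_of_le (by linarith)]

/-- The one-dimensional nonlocal Laplacian with rational kernel
`γ₁r(x,y) = 1/(δ²·|y−x|)` for `|y−x| ≤ δ` (and `0` otherwise) converges, as the
horizon `δ → 0⁺`, to the local Laplacian `u''(x)` for every `C²` function `u`. -/
theorem nonlocal_laplacian_rational_kernel_1d_limit
    (u : ℝ → ℝ) (hu : ContDiff ℝ 2 u) (x : ℝ) :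
    Tendsto (fun δ : ℝ => (2 / δ ^ 2) * ∫ y in (x - δ)..(x + δ), (u y - u x) / |y - x|)
      (nhdsWithin 0 (Set.Ioi 0)) (nhds (deriv (deriv u) x)) ∧
    Tendsto (fun δ : ℝ =>
        2 * ∫ y : ℝ, (if |y - x| ≤ δ then 1 / (δ ^ 2 * |y - x|) else 0) * (u y - u x))
      (nhdsWithin 0 (Set.Ioi 0)) (nhds (deriv (deriv u) x)) := by
  have hint := intervalIntegrable_sub_div_abs_sub hu.continuous (hu.differentiable two_ne_zero x)
  have hsymm_int (δ : ℝ) : IntervalIntegrable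
      (fun s => (u (x + s) - u x) / |s| + (u (x - s) - u x) / |s|) volume 0 δ := by
    have hplus : IntervalIntegrable (fun s => (u (x + s) - u x) / |s|) volume 0 δ := by
      simpa using (hint x (x + δ)).comp_add_left x
    have hminus : IntervalIntegrable (fun s => (u (x - s) - u x) / |s|) volume 0 δ := by
      simpa using (hint x (x - δ)).comp_sub_left x
    exact hplus.add hminus
  have hfirst : Tendsto (fun δ => (2 / δ ^ 2) * ∫ y in (x - δ)..(x + δ), (u y - u x) / |y - x|)
      (𝓝[>] 0) (𝓝 (deriv (deriv u) x)) := by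
    refine (tendsto_two_div_sq_mul_integral_of_isLittleO hsymm_int
      (hu.isLittleO_symm_sub_div_abs x)).congr fun δ => ?_
    rw [intervalIntegral.integral_centered_eq (hint _ _)]
    simp
  refine ⟨hfirst, hfirst.congr' ?_⟩
  filter_upwards [self_mem_nhdsWithin] with δ (hδ : 0 < δ)
  have hball := integral_ite_abs_sub_le_smul (fun y => 1 / (δ ^ 2 * |y - x|))
    (fun y => u y - u x) (x := x) hδ.le
  simp only [smul_eq_mul] at hball
  rw [hball, div_eq_mul_inv 2, mul_assoc, ← intervalIntegral.integral_const_mul]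
  congr 1
  exact intervalIntegral.integral_congr fun y _ => by ring
end

section
/- Let u : ℝ² → ℝ be twice continuously differentiable and let x ∈ ℝ². Then (6/(π·δ³))·∫_{{y : ‖y−x‖ ≤ δ}} (u(y) − u(x))/‖y − x‖ dy tends to Δu(x) = ∂²u/∂x₁²(x) + ∂²u/∂x₂²(x) as δ → 0⁺. Equivalently, the nonlocal Laplacian L_δ u(x) = 2·∫_{ℝ²} γ_{2,r}(x,y)·(u(y) − u(x)) dy with rational two-dimensional kernel γ_{2,r}(x,y) = 3/(π·δ³·‖y − x‖) for ‖y − x‖ ≤ δ and 0 otherwise converges to the local Laplacian Δu(x) in the limit of vanishing horizon. -/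
/-!
Expand `u (x + v) = u x + Du(x) v + ½ D²u(x)(v, v) + o(‖v‖²)`. Against the weight `1 / ‖v‖` on
the ball `‖v‖ ≤ δ`, the linear term integrates to zero because it is odd, and in dimension `d`
the quadratic term integrates to `(tr D²u(x) / d) · ∫ ‖v‖`: reflecting one coordinate kills the
mixed terms `vᵢ vⱼ / ‖v‖`, swapping two coordinates shows that all `vᵢ² / ‖v‖` have the same
integral, and these sum to `‖v‖`. The remainder is `o(∫ ‖v‖)`. In the plane
`∫_{‖v‖ ≤ δ} ‖v‖ = 2πδ³/3`, which accounts for the constant `6 / (πδ³)`.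
-/

open MeasureTheory Filter Real Set Metric Asymptotics Topology

section Taylor

variable {E F : Type*} [NormedAddCommGroup E] [NormedSpace ℝ E]
  [NormedAddCommGroup F] [NormedSpace ℝ F]

theorem isLittleO_sub_taylor_two_s14 {u : E → F} {u' : E → E →L[ℝ] F}
    {u'' : E →L[ℝ] E →L[ℝ] F} {x : E}
    (hu : ∀ y, HasFDerivAt u (u' y) y) (hu' : HasFDerivAt u' u'' x) :
    (fun y => u y - u x - u' x (y - x) - (2 : ℝ)⁻¹ • u'' (y - x) (y - x)) =o[𝓝 x]
      fun y => ‖y - x‖ ^ 2 := by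
  have hsymm := second_derivative_symmetric hu hu'
  have hquad : ∀ y, HasFDerivAt (fun z => u'' (z - x) (z - x))
      (u'' (y - x) + u''.flip (y - x)) y := fun y => by
    have hsub : HasFDerivAt (fun z : E => z - x) (ContinuousLinearMap.id ℝ E) y :=
      (hasFDerivAt_id y).sub_const x
    simpa using (u''.hasFDerivAt.comp y hsub).clm_apply hsub
  have hderiv : ∀ y, HasFDerivAt
      (fun z => u z - u' x (z - x) - (2 : ℝ)⁻¹ • u'' (z - x) (z - x))
      (u' y - u' x - u'' (y - x)) y := fun y => by
    refine (((hu y).sub ((u' x).hasFDerivAt.comp y ((hasFDerivAt_id y).sub_const x))).sub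
      ((hquad y).const_smul _)).congr_fderiv (ContinuousLinearMap.ext fun w => ?_)
    simp only [ContinuousLinearMap.comp_id, map_sub, smul_add, sub_apply, add_apply, smul_apply,
      ContinuousLinearMap.flip_apply, hsymm w, sub_right_inj]
    module
  have hsmall : (fun y => u' y - u' x - u'' (y - x)) =o[𝓝[univ] x] fun y => ‖y - x‖ ^ 1 := by
    simpa using hu'.isLittleO.norm_right
  simpa [nhdsWithin_univ, sub_right_comm _ (u x)] using
    convex_univ.isLittleO_pow_succ (mem_univ x) (fun y _ => (hderiv y).hasFDerivWithinAt) hsmall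

end Taylor

theorem setIntegral_closedBall_comp_sub {E G : Type*} [NormedAddCommGroup E] [MeasurableSpace E]
    [BorelSpace E] [NormedAddCommGroup G] [NormedSpace ℝ G] (μ : Measure E)
    [μ.IsAddRightInvariant] (g : E → G) (x : E) (δ : ℝ) :
    ∫ y in closedBall x δ, g (y - x) ∂μ = ∫ v in closedBall 0 δ, g v ∂μ := by
  have hind : (closedBall x δ).indicator (fun y => g (y - x))
      = fun y => (closedBall 0 δ).indicator g (y - x) := by
    funext y
    classical
    simp only [indicator_apply, mem_closedBall_iff_norm, sub_zero]
  rw [← integral_indicator measurableSet_closedBall, ← integral_indicator measurableSet_closedBall,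
    hind, integral_sub_right_eq_self]

section Symmetry

variable {E G : Type*} [NormedAddCommGroup E] [InnerProductSpace ℝ E] [FiniteDimensional ℝ E]
  [MeasurableSpace E] [BorelSpace E] [NormedAddCommGroup G] [NormedSpace ℝ G]

theorem setIntegral_closedBall_comp_linearIsometryEquiv (R : E ≃ₗᵢ[ℝ] E) (f : E → G) (δ : ℝ) :
    ∫ v in closedBall 0 δ, f (R v) = ∫ v in closedBall 0 δ, f v := by
  have hball : R ⁻¹' closedBall 0 δ = closedBall 0 δ := by ext v; simp
  simpa only [hball] using R.measurePreserving.setIntegral_preimage_emb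
    R.toHomeomorph.measurableEmbedding f (closedBall 0 δ)

theorem setIntegral_closedBall_eq_zero_of_comp_eq_neg (R : E ≃ₗᵢ[ℝ] E) {f : E → G}
    (hf : ∀ v, f (R v) = -f v) (δ : ℝ) : ∫ v in closedBall 0 δ, f v = 0 := by
  have : IsAddTorsionFree G := .of_isTorsionFree ℝ G
  simp_rw [← self_eq_neg, ← integral_neg, ← hf, setIntegral_closedBall_comp_linearIsometryEquiv]

end Symmetry

section Bounds

variable {E : Type*} [NormedAddCommGroup E] [ProperSpace E] [MeasurableSpace E] [BorelSpace E]
  (μ : Measure E) [IsFiniteMeasureOnCompacts μ] {g : E → ℝ} {x : E} {C δ : ℝ}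

theorem integrableOn_closedBall_of_abs_le (hg : AEStronglyMeasurable g μ)
    (hC : ∀ v ∈ closedBall x δ, |g v| ≤ C) : IntegrableOn g (closedBall x δ) μ :=
  Measure.integrableOn_of_bounded measure_closedBall_lt_top.ne hg <| by
    filter_upwards [ae_restrict_mem measurableSet_closedBall] with v hv
    exact hC v hv

theorem abs_setIntegral_closedBall_le_mul_integral_norm
    (hC : ∀ v ∈ closedBall (0 : E) δ, |g v| ≤ C * ‖v‖) :
    |∫ v in closedBall 0 δ, g v ∂μ| ≤ C * ∫ v in closedBall 0 δ, ‖v‖ ∂μ := by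
  have hint : IntegrableOn (fun v => C * ‖v‖) (closedBall (0 : E) δ) μ :=
    (continuous_const.mul continuous_norm).continuousOn.integrableOn_compact
      (isCompact_closedBall 0 δ)
  calc |∫ v in closedBall 0 δ, g v ∂μ| ≤ ∫ v in closedBall 0 δ, C * ‖v‖ ∂μ :=
        norm_integral_le_of_norm_le (f := g) hint <| by
          filter_upwards [ae_restrict_mem measurableSet_closedBall] with v hv
          simpa only [Real.norm_eq_abs] using hC v hv
    _ = C * ∫ v in closedBall 0 δ, ‖v‖ ∂μ := integral_const_mul _ _

end Bounds

section HaarBall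

variable {E : Type*} [NormedAddCommGroup E] [NormedSpace ℝ E] [FiniteDimensional ℝ E]
  [Nontrivial E] [MeasurableSpace E] [BorelSpace E] (μ : Measure E) [μ.IsAddHaarMeasure] {δ : ℝ}

theorem setIntegral_closedBall_norm (hδ : 0 ≤ δ) :
    ∫ v in closedBall (0 : E) δ, ‖v‖ ∂μ
      = Module.finrank ℝ E * μ.real (ball 0 1) * δ ^ (Module.finrank ℝ E + 1)
        / (Module.finrank ℝ E + 1) := by
  have hind : (closedBall (0 : E) δ).indicator (fun v => ‖v‖)
      = fun v => (Iic δ).indicator id ‖v‖ := by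
    funext v
    classical
    simp [indicator_apply]
  rw [← integral_indicator measurableSet_closedBall, hind, integral_fun_norm_addHaar]
  have hradial : ∫ y in Ioi (0 : ℝ), y ^ (Module.finrank ℝ E - 1) • (Iic δ).indicator id y
      = δ ^ (Module.finrank ℝ E + 1) / (Module.finrank ℝ E + 1) := by
    have hint : (fun y : ℝ => y ^ (Module.finrank ℝ E - 1) • (Iic δ).indicator id y)
        = (Iic δ).indicator (fun y => y ^ Module.finrank ℝ E) := by
      funext y
      classical
      simp only [indicator_apply, id, smul_eq_mul, mul_ite, mul_zero,
        pow_sub_one_mul Module.finrank_pos.ne']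
    rw [hint, setIntegral_indicator measurableSet_Iic, Ioi_inter_Iic,
      ← intervalIntegral.integral_of_le hδ, integral_pow]
    simp
  rw [hradial, nsmul_eq_mul, smul_eq_mul]
  ring

theorem setIntegral_closedBall_norm_pos (hδ : 0 < δ) :
    0 < ∫ v in closedBall (0 : E) δ, ‖v‖ ∂μ := by
  have hball : 0 < μ.real (ball (0 : E) 1) :=
    ENNReal.toReal_pos (measure_ball_pos μ 0 one_pos).ne' measure_ball_lt_top.ne
  have hdim : 0 < Module.finrank ℝ E := Module.finrank_pos
  rw [setIntegral_closedBall_norm μ hδ.le]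
  positivity

end HaarBall

section Euclidean

variable {ι : Type*} [Fintype ι]

theorem integrableOn_closedBall_mul_div_norm (i j : ι) (δ : ℝ) :
    IntegrableOn (fun v : EuclideanSpace ℝ ι => v i * v j / ‖v‖) (closedBall 0 δ) := by
  refine integrableOn_closedBall_of_abs_le (C := δ) _
    (Measurable.aestronglyMeasurable (by fun_prop))
    fun v hv => ?_
  rw [abs_div, abs_norm, abs_mul]
  rcases eq_or_ne v 0 with rfl | hv0
  · simpa using hv
  rw [div_le_iff₀ (norm_pos_iff.mpr hv0)]
  calc |v i| * |v j| ≤ ‖v‖ * ‖v‖ := by gcongr <;> exact PiLp.norm_apply_le v _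
    _ ≤ δ * ‖v‖ := by gcongr; exact mem_closedBall_zero_iff.mp hv

variable [DecidableEq ι]

theorem setIntegral_closedBall_mul_div_norm_eq_zero {i j : ι} (hij : i ≠ j) (δ : ℝ) :
    ∫ v in closedBall (0 : EuclideanSpace ℝ ι) δ, v i * v j / ‖v‖ = 0 :=
  setIntegral_closedBall_eq_zero_of_comp_eq_neg
    (.piLpCongrRight 2 fun k => if k = i then .neg ℝ else .refl ℝ ℝ)
    (fun v => by rw [LinearIsometryEquiv.norm_map]; simp [hij.symm, neg_div]) δ

theorem setIntegral_closedBall_sq_div_norm_eq (i j : ι) (δ : ℝ) :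
    ∫ v in closedBall (0 : EuclideanSpace ℝ ι) δ, v i ^ 2 / ‖v‖
      = ∫ v in closedBall (0 : EuclideanSpace ℝ ι) δ, v j ^ 2 / ‖v‖ := by
  rw [← setIntegral_closedBall_comp_linearIsometryEquiv
    (.piLpCongrLeft 2 ℝ ℝ (Equiv.swap i j))]
  simp

theorem bilin_apply_self_eq_sum_single
    (B : EuclideanSpace ℝ ι →L[ℝ] EuclideanSpace ℝ ι →L[ℝ] ℝ) (v : EuclideanSpace ℝ ι) :
    B v v = ∑ i, ∑ j, B (EuclideanSpace.single i 1) (EuclideanSpace.single j 1) * (v i * v j) := by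
  conv_lhs => rw [← (EuclideanSpace.basisFun ι ℝ).sum_repr v]
  simp only [EuclideanSpace.basisFun_repr, EuclideanSpace.basisFun_apply, map_sum, map_smul,
    sum_apply, smul_apply, smul_eq_mul, Finset.mul_sum,
    mul_comm]
  rw [Finset.sum_comm]
  exact Finset.sum_congr rfl fun _ _ => Finset.sum_congr rfl fun _ _ => by ring

theorem setIntegral_closedBall_sq_div_norm (i : ι) (δ : ℝ) :
    ∫ v in closedBall (0 : EuclideanSpace ℝ ι) δ, v i ^ 2 / ‖v‖
      = (Fintype.card ι : ℝ)⁻¹ * ∫ v in closedBall (0 : EuclideanSpace ℝ ι) δ, ‖v‖ := by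
  have hsum : ∑ j, ∫ v in closedBall (0 : EuclideanSpace ℝ ι) δ, v j ^ 2 / ‖v‖
      = ∫ v in closedBall (0 : EuclideanSpace ℝ ι) δ, ‖v‖ := by
    rw [← integral_finsetSum _ fun j _ => by
      simpa only [sq, IntegrableOn] using integrableOn_closedBall_mul_div_norm j j δ]
    congr with v
    rw [← Finset.sum_div, ← EuclideanSpace.real_norm_sq_eq, sq, mul_self_div_self]
  simp only [setIntegral_closedBall_sq_div_norm_eq _ i, Finset.sum_const, Finset.card_univ,
    nsmul_eq_mul] at hsum
  have : Nonempty ι := ⟨i⟩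
  have hcard : (Fintype.card ι : ℝ) ≠ 0 := Nat.cast_ne_zero.mpr Fintype.card_ne_zero
  rw [← hsum, inv_mul_cancel_left₀ hcard]

theorem setIntegral_closedBall_bilin_div_norm
    (B : EuclideanSpace ℝ ι →L[ℝ] EuclideanSpace ℝ ι →L[ℝ] ℝ) (δ : ℝ) :
    ∫ v in closedBall (0 : EuclideanSpace ℝ ι) δ, B v v / ‖v‖
      = (Fintype.card ι : ℝ)⁻¹ * (∑ i, B (EuclideanSpace.single i 1) (EuclideanSpace.single i 1))
        * ∫ v in closedBall (0 : EuclideanSpace ℝ ι) δ, ‖v‖ := by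
  have hint (i j : ι) := integrableOn_closedBall_mul_div_norm (ι := ι) i j δ
  have hexp (v : EuclideanSpace ℝ ι) : B v v / ‖v‖ = ∑ i, ∑ j,
      B (EuclideanSpace.single i 1) (EuclideanSpace.single j 1) * (v i * v j / ‖v‖) := by
    simp_rw [bilin_apply_self_eq_sum_single, Finset.sum_div, mul_div_assoc]
  simp_rw [hexp]
  rw [integral_finsetSum _ fun i _ => integrable_finsetSum _ fun j _ => (hint i j).const_mul _]
  simp_rw [integral_finsetSum _ fun j _ => (hint _ j).const_mul _, integral_const_mul]
  rw [mul_comm, Finset.mul_sum, Finset.mul_sum]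
  refine Finset.sum_congr rfl fun i _ => ?_
  rw [Finset.sum_eq_single i (fun j _ hji => by
      rw [setIntegral_closedBall_mul_div_norm_eq_zero hji.symm, mul_zero]) (by simp)]
  simp_rw [← sq, setIntegral_closedBall_sq_div_norm]
  ring

theorem setIntegral_closedBall_div_norm_eq_add {f : EuclideanSpace ℝ ι → ℝ}
    (F : EuclideanSpace ℝ ι →L[ℝ] ℝ) (B : EuclideanSpace ℝ ι →L[ℝ] EuclideanSpace ℝ ι →L[ℝ] ℝ)
    {δ : ℝ} (hR : IntegrableOn (fun v => (f v - F v - 2⁻¹ * B v v) / ‖v‖) (closedBall 0 δ)) :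
    ∫ v in closedBall 0 δ, f v / ‖v‖
      = (∫ v in closedBall 0 δ, (f v - F v - 2⁻¹ * B v v) / ‖v‖)
        + (2 * Fintype.card ι : ℝ)⁻¹
          * (∑ i, B (EuclideanSpace.single i 1) (EuclideanSpace.single i 1))
          * ∫ v in closedBall (0 : EuclideanSpace ℝ ι) δ, ‖v‖ := by
  have hF : IntegrableOn (fun v => F v / ‖v‖) (closedBall 0 δ) := by
    refine integrableOn_closedBall_of_abs_le (C := ‖F‖) _
      (Measurable.aestronglyMeasurable (by fun_prop)) fun v _ => ?_
    rw [abs_div, abs_norm]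
    exact div_le_of_le_mul₀ (norm_nonneg v) (norm_nonneg F) (F.le_opNorm v)
  have hB : IntegrableOn (fun v => B v v / ‖v‖) (closedBall 0 δ) := by
    refine integrableOn_closedBall_of_abs_le (C := ‖B‖ * δ) _
      (Measurable.aestronglyMeasurable (by fun_prop)) fun v hv => ?_
    rw [abs_div, abs_norm]
    rcases eq_or_ne v 0 with rfl | hv0
    · simpa using mul_nonneg (norm_nonneg B) (nonneg_of_mem_closedBall hv)
    rw [div_le_iff₀ (norm_pos_iff.mpr hv0)]
    calc |B v v| ≤ ‖B‖ * ‖v‖ * ‖v‖ := B.le_opNorm₂ v v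
      _ ≤ ‖B‖ * δ * ‖v‖ := by gcongr; exact mem_closedBall_zero_iff.mp hv
  have hF0 : ∫ v in closedBall 0 δ, F v / ‖v‖ = 0 :=
    setIntegral_closedBall_eq_zero_of_comp_eq_neg (.neg ℝ) (fun v => by simp [neg_div]) δ
  have hsplit : (fun v => f v / ‖v‖)
      = fun v => (f v - F v - 2⁻¹ * B v v) / ‖v‖ + (F v / ‖v‖ + 2⁻¹ * (B v v / ‖v‖)) := by
    funext v
    ring
  have hFB : IntegrableOn (fun v => F v / ‖v‖ + 2⁻¹ * (B v v / ‖v‖)) (closedBall 0 δ) :=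
    hF.add (hB.const_mul _)
  rw [hsplit, integral_add hR hFB, integral_add hF (hB.const_mul _),
    integral_const_mul, hF0, setIntegral_closedBall_bilin_div_norm]
  ring

theorem abs_setIntegral_closedBall_div_norm_div_sub_le [Nonempty ι]
    {f : EuclideanSpace ℝ ι → ℝ} (hf : Continuous f) (F : EuclideanSpace ℝ ι →L[ℝ] ℝ)
    (B : EuclideanSpace ℝ ι →L[ℝ] EuclideanSpace ℝ ι →L[ℝ] ℝ) {c δ : ℝ} (hδ : 0 < δ)
    (hR : ∀ v ∈ closedBall (0 : EuclideanSpace ℝ ι) δ, |f v - F v - 2⁻¹ * B v v| ≤ c * ‖v‖ ^ 2) :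
    |(∫ v in closedBall 0 δ, f v / ‖v‖) / (∫ v in closedBall (0 : EuclideanSpace ℝ ι) δ, ‖v‖)
      - (2 * Fintype.card ι : ℝ)⁻¹
        * ∑ i, B (EuclideanSpace.single i 1) (EuclideanSpace.single i 1)| ≤ c := by
  have hbound : ∀ v ∈ closedBall (0 : EuclideanSpace ℝ ι) δ,
      |(f v - F v - 2⁻¹ * B v v) / ‖v‖| ≤ c * ‖v‖ := fun v hv => by
    rw [abs_div, abs_norm]
    rcases eq_or_ne v 0 with rfl | hv0
    · simp
    rw [div_le_iff₀ (norm_pos_iff.mpr hv0), mul_assoc, ← sq]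
    exact hR v hv
  have hint : IntegrableOn (fun v => (f v - F v - 2⁻¹ * B v v) / ‖v‖) (closedBall 0 δ) := by
    refine integrableOn_closedBall_of_abs_le (C := |c| * δ) _
      (Measurable.aestronglyMeasurable (by fun_prop)) fun v hv => (hbound v hv).trans ?_
    gcongr
    exacts [le_abs_self c, mem_closedBall_zero_iff.mp hv]
  have hm := setIntegral_closedBall_norm_pos (volume : Measure (EuclideanSpace ℝ ι)) hδ
  rw [setIntegral_closedBall_div_norm_eq_add F B hint, add_div, mul_div_cancel_right₀ _ hm.ne',
    add_sub_cancel_right, abs_div, abs_of_pos hm, div_le_iff₀ hm]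
  exact abs_setIntegral_closedBall_le_mul_integral_norm volume hbound

theorem tendsto_setIntegral_closedBall_div_norm [Nonempty ι] {u : EuclideanSpace ℝ ι → ℝ}
    (hu : ContDiff ℝ 2 u) (x : EuclideanSpace ℝ ι) :
    Tendsto (fun δ => (∫ y in closedBall x δ, (u y - u x) / ‖y - x‖)
        / ∫ v in closedBall (0 : EuclideanSpace ℝ ι) δ, ‖v‖) (𝓝[>] 0)
      (𝓝 ((2 * Fintype.card ι : ℝ)⁻¹ * ∑ i, fderiv ℝ (fderiv ℝ u) x
        (EuclideanSpace.single i 1) (EuclideanSpace.single i 1))) := by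
  have htaylor := isLittleO_sub_taylor_two_s14 (fun y => (hu.differentiable two_ne_zero y).hasFDerivAt)
    ((hu.fderiv_right one_add_one_eq_two.le).differentiable one_ne_zero x).hasFDerivAt
  rw [Metric.tendsto_nhds]
  intro ε hε
  obtain ⟨r, hr, hrem⟩ := Metric.eventually_nhds_iff.mp (htaylor.def (half_pos hε))
  filter_upwards [Ioo_mem_nhdsGT hr] with δ ⟨hδ, hδr⟩
  have htrans : ∫ y in closedBall x δ, (u y - u x) / ‖y - x‖
      = ∫ v in closedBall 0 δ, (u (v + x) - u x) / ‖v‖ := by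
    simpa using setIntegral_closedBall_comp_sub volume (fun v => (u (v + x) - u x) / ‖v‖) x δ
  rw [htrans, Real.dist_eq]
  have hcont := hu.continuous
  refine (abs_setIntegral_closedBall_div_norm_div_sub_le (f := fun v => u (v + x) - u x)
    (by fun_prop) (fderiv ℝ u x) (fderiv ℝ (fderiv ℝ u) x) hδ fun v hv => ?_).trans_lt
    (half_lt_self hε)
  have hvr : dist (v + x) x < r := by
    simpa [dist_eq_norm] using (mem_closedBall_zero_iff.mp hv).trans_lt hδr
  simpa [smul_eq_mul, sub_right_comm _ (u x)] using hrem hvr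

end Euclidean

theorem setIntegral_closedBall_norm_fin_two {δ : ℝ} (hδ : 0 ≤ δ) :
    ∫ v in closedBall (0 : EuclideanSpace ℝ (Fin 2)) δ, ‖v‖ = 2 * π * δ ^ 3 / 3 := by
  rw [setIntegral_closedBall_norm _ hδ, finrank_euclideanSpace_fin, measureReal_def,
    EuclideanSpace.volume_ball_fin_two]
  simp only [Nat.cast_ofNat, ENNReal.ofReal_one, one_pow, one_mul, ENNReal.toReal_ofReal pi_pos.le]
  ring

/-- The two-dimensional nonlocal Laplacian with rational kernel
`γ₂r(x,y) = 3/(πδ³‖y−x‖)` for `‖y−x‖ ≤ δ` (and `0` otherwise) converges, as the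
horizon `δ → 0⁺`, to the local Laplacian `Δu(x)` for every `C²` function `u` on
`ℝ²`.  Here `Δu(x)` is expressed as the sum of the pure second directional
derivatives along the coordinate directions. -/
theorem nonlocal_laplacian_rational_kernel_2d_limit
    (u : EuclideanSpace ℝ (Fin 2) → ℝ) (hu : ContDiff ℝ 2 u)
    (x : EuclideanSpace ℝ (Fin 2)) :
    Tendsto (fun δ : ℝ =>
        (6 / (π * δ ^ 3)) * ∫ y in Metric.closedBall x δ, (u y - u x) / ‖y - x‖)
      (nhdsWithin 0 (Set.Ioi 0))
      (nhds (∑ i : Fin 2, iteratedFDeriv ℝ 2 u x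
        ![EuclideanSpace.single i (1 : ℝ), EuclideanSpace.single i (1 : ℝ)])) ∧
    Tendsto (fun δ : ℝ =>
        2 * ∫ y : EuclideanSpace ℝ (Fin 2),
          (if ‖y - x‖ ≤ δ then 3 / (π * δ ^ 3 * ‖y - x‖) else 0) * (u y - u x))
      (nhdsWithin 0 (Set.Ioi 0))
      (nhds (∑ i : Fin 2, iteratedFDeriv ℝ 2 u x
        ![EuclideanSpace.single i (1 : ℝ), EuclideanSpace.single i (1 : ℝ)])) := by
  have hΔ : 4 * ((2 * Fintype.card (Fin 2) : ℝ)⁻¹ * ∑ i, fderiv ℝ (fderiv ℝ u) x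
      (EuclideanSpace.single i 1) (EuclideanSpace.single i 1))
      = ∑ i : Fin 2, iteratedFDeriv ℝ 2 u x
        ![EuclideanSpace.single i (1 : ℝ), EuclideanSpace.single i (1 : ℝ)] := by
    norm_num [← mul_assoc, iteratedFDeriv_two_apply]
  have hscaled : ∀ δ > 0, 4 * ((∫ y in closedBall x δ, (u y - u x) / ‖y - x‖)
      / ∫ v in closedBall (0 : EuclideanSpace ℝ (Fin 2)) δ, ‖v‖)
      = 6 / (π * δ ^ 3) * ∫ y in closedBall x δ, (u y - u x) / ‖y - x‖ := fun δ hδ => by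
    rw [setIntegral_closedBall_norm_fin_two hδ.le]
    field_simp
    ring
  have hkernel : ∀ δ : ℝ, 6 / (π * δ ^ 3) * ∫ y in closedBall x δ, (u y - u x) / ‖y - x‖
      = 2 * ∫ y, (if ‖y - x‖ ≤ δ then 3 / (π * δ ^ 3 * ‖y - x‖) else 0) * (u y - u x) :=
    fun δ => by
      classical
      rw [← integral_const_mul, ← integral_const_mul, ← integral_indicator measurableSet_closedBall]
      congr 1 with y
      by_cases hy : ‖y - x‖ ≤ δ
      · rw [indicator_of_mem (mem_closedBall_iff_norm.mpr hy), if_pos hy]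
        ring
      · rw [indicator_of_notMem (mt mem_closedBall_iff_norm.mp hy), if_neg hy, zero_mul, mul_zero]
  have hfirst := ((tendsto_setIntegral_closedBall_div_norm hu x).const_mul 4).congr'
    (eventually_nhdsWithin_of_forall hscaled)
  rw [hΔ] at hfirst
  exact ⟨hfirst, hfirst.congr hkernel⟩
end
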